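/- arXiv:1506.04430 — 7 statements merged into one kernel-verified Lean document; each statement's English description precedes it below -/
import Mathlib

section
/- Let N ≥ 1, let E = [0,∞)^N, and let ν be a σ-finite Borel measure on E with ν({0}) = 0 and ∫_E z_k ν(dz) = 1 for every k ∈ {1,…,N}. Define the exponent measure μ on E by μ(A) = ∫_E ∫_0^∞ 1{ζz ∈ A} ζ^{-2} dζ ν(dz), and for each k define the probability measure P_k on E by P_k(A) = ∫_E 1{z_k > 0} 1{z/z_k ∈ A} z_k ν(dz). Then for every u > 0 and every Borel set A of the L¹-unit sphere S_{N-1} = {z ∈ E : ‖z‖ = 1}, one has μ({z ∈ E : ‖z‖ > u, z/‖z‖ ∈ A}) = (1/u) · Σ_{k=1}^N P_k({y ∈ E : ‖y‖ > 0, y/‖y‖ ∈ A}). -/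
open MeasureTheory Set ProbabilityTheory

/-- The exponent measure `μ(A) = ∫_E ∫_0^∞ 1{ζz ∈ A} ζ⁻² dζ ν(dz)`, realized as the
pushforward of `(ζ⁻² dζ on (0,∞)) ⊗ ν` under `(ζ, z) ↦ ζ • z`. -/
noncomputable def exponentMeasure {N : ℕ} (ν : Measure (Fin N → ℝ)) :
    Measure (Fin N → ℝ) :=
  Measure.map (fun p : ℝ × (Fin N → ℝ) => p.1 • p.2)
    ((((volume : Measure ℝ).restrict (Set.Ioi (0 : ℝ))).withDensity
        (fun ζ => ENNReal.ofReal ((ζ ^ 2)⁻¹))).prod ν)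

/-- The measure `P_k(A) = ∫_E 1{z_k > 0} 1{z / z_k ∈ A} z_k ν(dz)`, realized as the
pushforward of `z_k · ν` restricted to `{z_k > 0}` under `z ↦ z / z_k`. -/
noncomputable def Pmeas {N : ℕ} (ν : Measure (Fin N → ℝ)) (k : Fin N) :
    Measure (Fin N → ℝ) :=
  Measure.map (fun z : Fin N → ℝ => (z k)⁻¹ • z)
    ((ν.restrict {z : Fin N → ℝ | 0 < z k}).withDensity
      (fun z => ENNReal.ofReal (z k)))

lemma lintegral_Ioi_inv_sq {a : ℝ} (ha : 0 < a) :
    ∫⁻ x in Ioi a, ENNReal.ofReal ((x ^ 2)⁻¹) = ENNReal.ofReal a⁻¹ := by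
  have h1 : ∀ x ∈ Ioi a, ENNReal.ofReal ((x ^ 2)⁻¹) = ENNReal.ofReal (x ^ (-2 : ℝ)) := by
    intro x hx
    have hx0 : 0 < x := ha.trans hx
    rw [Real.rpow_neg hx0.le, Real.rpow_two]
  rw [setLIntegral_congr_fun measurableSet_Ioi h1,
    ← ofReal_integral_eq_lintegral_ofReal
      (integrableOn_Ioi_rpow_of_lt (by norm_num) ha)
      ((ae_restrict_mem measurableSet_Ioi).mono fun x hx =>
        Real.rpow_nonneg (ha.trans hx).le _),
    integral_Ioi_rpow_of_lt (by norm_num) ha]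
  norm_num
  rw [Real.rpow_neg_one]

/-- key polar-coordinates computation for the spectral measure (Theorem 1).
For `u > 0` and a Borel subset `A` of the L¹-unit sphere,
`μ({z : ‖z‖ > u, z/‖z‖ ∈ A}) = u⁻¹ · Σ_k P_k({y : ‖y‖ > 0, y/‖y‖ ∈ A})`. -/
theorem exponentMeasure_polar (N : ℕ) (hN : 1 ≤ N)
    (ν : Measure (Fin N → ℝ)) [SigmaFinite ν]
    (hE : ∀ᵐ z ∂ν, ∀ i, 0 ≤ z i)
    (hzero : ν {0} = 0)
    (hmoment : ∀ k : Fin N, ∫⁻ z, ENNReal.ofReal (z k) ∂ν = 1)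
    (u : ℝ) (hu : 0 < u)
    (A : Set (Fin N → ℝ)) (hA : MeasurableSet A)
    (hAsphere : A ⊆ {s : Fin N → ℝ | (∀ i, 0 ≤ s i) ∧ ∑ i, s i = 1}) :
    exponentMeasure ν {z : Fin N → ℝ | u < ∑ i, z i ∧ (∑ i, z i)⁻¹ • z ∈ A}
      = (ENNReal.ofReal u)⁻¹ *
        ∑ k : Fin N,
          Pmeas ν k {y : Fin N → ℝ | 0 < ∑ i, y i ∧ (∑ i, y i)⁻¹ • y ∈ A} := by
  classical
  have msum : Measurable fun z : Fin N → ℝ => ∑ i, z i :=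
    Finset.measurable_sum _ fun i _ => measurable_pi_apply i
  have mnorm : Measurable fun z : Fin N → ℝ => (∑ i, z i)⁻¹ • z :=
    msum.inv.smul measurable_id
  set B := {z : Fin N → ℝ | u < ∑ i, z i ∧ (∑ i, z i)⁻¹ • z ∈ A} with hBdef
  set C := {y : Fin N → ℝ | 0 < ∑ i, y i ∧ (∑ i, y i)⁻¹ • y ∈ A} with hCdef
  have hB : MeasurableSet B := (measurableSet_lt measurable_const msum).inter (mnorm hA)
  have hC : MeasurableSet C := (measurableSet_lt measurable_const msum).inter (mnorm hA)
  set S := {z : Fin N → ℝ | (∑ i, z i)⁻¹ • z ∈ A} with hSdef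
  have hS : MeasurableSet S := mnorm hA
  -- a.e. every point is componentwise nonneg with positive sum
  have hgood : ∀ᵐ z ∂ν, (∀ i, 0 ≤ z i) ∧ 0 < ∑ i, z i := by
    have hz : ∀ᵐ z ∂ν, z ≠ 0 := by
      rw [ae_iff]
      simpa [Set.setOf_eq_eq_singleton'] using hzero
    filter_upwards [hE, hz] with z h1 h2
    refine ⟨h1, ?_⟩
    obtain ⟨i, hi⟩ := Function.ne_iff.mp h2
    exact Finset.sum_pos' (fun j _ => h1 j)
      ⟨i, Finset.mem_univ i, lt_of_le_of_ne (h1 i) (Ne.symm hi)⟩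
  -- compute sums under scalar multiplication
  have hsmulsum : ∀ (c : ℝ) (z : Fin N → ℝ), (∑ i, (c • z) i) = c * ∑ i, z i := by
    intro c z
    simp [Finset.mul_sum]
  -- LHS key computation
  have key : exponentMeasure ν B
      = ∫⁻ z, S.indicator
          (fun w => ENNReal.ofReal u⁻¹ * ENNReal.ofReal (∑ i, w i)) z ∂ν := by
    rw [exponentMeasure, Measure.map_apply (show Measurable (fun p : ℝ × (Fin N → ℝ) => p.1 • p.2) from measurable_fst.smul measurable_snd) hB,
      Measure.prod_apply_symm ((show Measurable (fun p : ℝ × (Fin N → ℝ) => p.1 • p.2) from measurable_fst.smul measurable_snd) hB)]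
    refine lintegral_congr_ae ?_
    filter_upwards [hgood] with z hz
    obtain ⟨hnn, hL⟩ := hz
    have hzmeas : MeasurableSet ((fun ζ : ℝ => ζ • z) ⁻¹' B) :=
      (measurable_id.smul measurable_const) hB
    have hpre : ((fun ζ : ℝ => (ζ, z)) ⁻¹' ((fun p : ℝ × (Fin N → ℝ) => p.1 • p.2) ⁻¹' B))
        = (fun ζ : ℝ => ζ • z) ⁻¹' B := rfl
    rw [hpre, withDensity_apply _ hzmeas, Measure.restrict_restrict hzmeas]
    by_cases hzA : z ∈ S
    · have hset : (fun ζ : ℝ => ζ • z) ⁻¹' B ∩ Ioi 0 = Ioi (u / (∑ i, z i)) := by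
        ext ζ
        simp only [mem_inter_iff, mem_preimage, mem_Ioi, hBdef, mem_setOf_eq, hsmulsum]
        constructor
        · rintro ⟨⟨h1, _⟩, h2⟩
          exact (div_lt_iff₀ hL).mpr (by linarith [mul_comm ζ (∑ i, z i)])
        · intro h
          have hζ : 0 < ζ := lt_trans (div_pos hu hL) h
          refine ⟨⟨?_, ?_⟩, hζ⟩
          · have := (div_lt_iff₀ hL).mp h
            linarith [mul_comm (∑ i, z i) ζ]
          · have : (ζ * ∑ i, z i)⁻¹ • ζ • z = (∑ i, z i)⁻¹ • z := by
              rw [smul_smul]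
              congr 1
              field_simp
            rw [this]
            exact hzA
      rw [hset, lintegral_Ioi_inv_sq (div_pos hu hL),
        Set.indicator_of_mem hzA]
      rw [inv_div, div_eq_mul_inv, ENNReal.ofReal_mul hL.le, mul_comm]
    · have hset : (fun ζ : ℝ => ζ • z) ⁻¹' B ∩ Ioi 0 = ∅ := by
        ext ζ
        simp only [mem_inter_iff, mem_preimage, mem_Ioi, hBdef, mem_setOf_eq, hsmulsum,
          mem_empty_iff_false, iff_false, not_and]
        rintro ⟨h1, h2⟩ hζ
        apply hzA
        have : (ζ * ∑ i, z i)⁻¹ • ζ • z = (∑ i, z i)⁻¹ • z := by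
          rw [smul_smul]
          congr 1
          field_simp
        rw [this] at h2
        exact h2
      rw [hset, Set.indicator_of_notMem hzA]
      simp
  -- rewrite LHS as the sum of moment integrals
  have lhs2 : exponentMeasure ν B
      = (ENNReal.ofReal u)⁻¹ *
        ∑ k : Fin N, ∫⁻ z, S.indicator (fun w => ENNReal.ofReal (w k)) z ∂ν := by
    rw [key]
    have hcongr : ∀ᵐ z ∂ν,
        S.indicator (fun w => ENNReal.ofReal u⁻¹ * ENNReal.ofReal (∑ i, w i)) z
          = ENNReal.ofReal u⁻¹ *
            ∑ k : Fin N, S.indicator (fun w => ENNReal.ofReal (w k)) z := by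
      filter_upwards [hgood] with z hz
      by_cases hzS : z ∈ S
      · simp only [Set.indicator_of_mem hzS]
        rw [ENNReal.ofReal_sum_of_nonneg (fun i _ => hz.1 i), Finset.mul_sum]
      · simp [Set.indicator_of_notMem hzS]
    rw [lintegral_congr_ae hcongr, lintegral_const_mul _
      (Finset.measurable_sum _ fun k _ =>
        ((measurable_pi_apply k).ennreal_ofReal).indicator hS),
      lintegral_finset_sum _ fun k _ =>
        ((measurable_pi_apply k).ennreal_ofReal).indicator hS,
      ENNReal.ofReal_inv_of_pos hu]
  -- RHS: each Pmeas term
  have hPk : ∀ k : Fin N,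
      Pmeas ν k C = ∫⁻ z, S.indicator (fun w => ENNReal.ofReal (w k)) z ∂ν := by
    intro k
    have hgk : Measurable fun z : Fin N → ℝ => (z k)⁻¹ • z :=
      (measurable_pi_apply k).inv.smul measurable_id
    have hSk : MeasurableSet {z : Fin N → ℝ | 0 < z k} :=
      measurableSet_lt measurable_const (measurable_pi_apply k)
    rw [Pmeas, Measure.map_apply hgk hC, withDensity_apply _ (hgk hC),
      Measure.restrict_restrict (hgk hC),
      ← lintegral_indicator ((hgk hC).inter hSk)]
    refine lintegral_congr_ae ?_
    filter_upwards [hgood] with z hz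
    obtain ⟨hnn, hL⟩ := hz
    by_cases hk : 0 < z k
    · have hmem : z ∈ ((fun z : Fin N → ℝ => (z k)⁻¹ • z) ⁻¹' C
          ∩ {z : Fin N → ℝ | 0 < z k}) ↔ z ∈ S := by
        simp only [mem_inter_iff, mem_preimage, hCdef, mem_setOf_eq, hsmulsum, hk, and_true]
        have hsum : (z k)⁻¹ * ∑ i, z i > 0 := mul_pos (inv_pos.mpr hk) hL
        have heq : ((z k)⁻¹ * ∑ i, z i)⁻¹ • (z k)⁻¹ • z = (∑ i, z i)⁻¹ • z := by
          rw [smul_smul]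
          congr 1
          field_simp
        rw [heq]
        simp only [hsum, true_and]
        exact Iff.rfl
      by_cases hzS : z ∈ S
      · rw [Set.indicator_of_mem (hmem.mpr hzS), Set.indicator_of_mem hzS]
      · rw [Set.indicator_of_notMem (fun h => hzS (hmem.mp h)),
          Set.indicator_of_notMem hzS]
    · have hk0 : z k = 0 := le_antisymm (not_lt.mp hk) (hnn k)
      have h1 : z ∉ ((fun z : Fin N → ℝ => (z k)⁻¹ • z) ⁻¹' C
          ∩ {z : Fin N → ℝ | 0 < z k}) := fun h => hk h.2
      rw [Set.indicator_of_notMem h1]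
      by_cases hzS : z ∈ S
      · rw [Set.indicator_of_mem hzS, hk0]
        simp
      · rw [Set.indicator_of_notMem hzS]
  rw [lhs2]
  congr 1
  exact Finset.sum_congr rfl fun k _ => (hPk k).symm
end

section
/- Let N ≥ 1, E = [0,∞)^N, and let ν be a σ-finite Borel measure on E with ν({0}) = 0 and ∫_E z_k ν(dz) = 1 for every k. Define μ and P_1,…,P_N as usual, and define the spectral measure H on the L¹-unit sphere S_{N-1} = {z ∈ E : ‖z‖ = 1} by H(A) = N^{-1} μ({z ∈ E : ‖z‖ > 1, z/‖z‖ ∈ A}). Let T be uniformly distributed on {1,…,N} and, independently of T, let Y^{(1)},…,Y^{(N)} be independent E-valued random vectors with Y^{(k)} distributed according to P_k. Then H is a probability measure on S_{N-1}, ‖Y^{(T)}‖ ≥ 1 almost surely, and the random vector Y^{(T)}/‖Y^{(T)}‖ has distribution H. -/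
open MeasureTheory Set ProbabilityTheory
open scoped ENNReal

/-- The spectral measure `H(A) = N⁻¹ μ({z : ‖z‖ > 1, z/‖z‖ ∈ A})` on the L¹-unit
sphere. -/
noncomputable def spectralMeasure {N : ℕ} (ν : Measure (Fin N → ℝ)) :
    Measure (Fin N → ℝ) :=
  (N : ℝ≥0∞)⁻¹ •
    Measure.map (fun z : Fin N → ℝ => (∑ i, z i)⁻¹ • z)
      ((exponentMeasure ν).restrict {z : Fin N → ℝ | 1 < ∑ i, z i})

/-! ### Auxiliary lemmas -/

section Aux

lemma lint_Ioi_aux (a : ℝ) (ha : 0 < a) :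
    ∫⁻ ζ in Set.Ioi a, ENNReal.ofReal ((ζ ^ 2)⁻¹) = ENNReal.ofReal a⁻¹ := by
  have hcong : ∀ ζ ∈ Set.Ioi a, ((ζ:ℝ) ^ 2)⁻¹ = ζ ^ (-2 : ℝ) := by
    intro ζ hζ
    rw [Real.rpow_neg (le_of_lt (ha.trans hζ)), ← Real.rpow_natCast ζ 2]
    norm_num
  have hint : IntegrableOn (fun ζ : ℝ => (ζ ^ 2)⁻¹) (Set.Ioi a) :=
    ((integrableOn_Ioi_rpow_of_lt (by norm_num : (-2:ℝ) < -1) ha).congr_fun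
      (fun x hx => (hcong x hx).symm) measurableSet_Ioi)
  rw [← ofReal_integral_eq_lintegral_ofReal hint
    (Filter.Eventually.of_forall fun ζ => by positivity)]
  congr 1
  rw [setIntegral_congr_fun measurableSet_Ioi hcong,
    integral_Ioi_rpow_of_lt (by norm_num) ha]
  norm_num
  rw [Real.rpow_neg_one]

/-- The radial measure `ζ⁻² dζ` on `(0,∞)`. -/
noncomputable def lamAux : Measure ℝ :=
  (((volume : Measure ℝ).restrict (Set.Ioi (0 : ℝ))).withDensity
        (fun ζ => ENNReal.ofReal ((ζ ^ 2)⁻¹)))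

instance : SFinite lamAux := by unfold lamAux; infer_instance

lemma lamAux_apply (S : Set ℝ) (hS : MeasurableSet S) :
    lamAux S = ∫⁻ ζ in S ∩ Set.Ioi 0, ENNReal.ofReal ((ζ ^ 2)⁻¹) := by
  rw [lamAux, withDensity_apply _ hS, Measure.restrict_restrict hS]

/-- The key slice computation: `lamAux {ζ | q ζ ∧ 1 < ζ * c} = c⁺` when, for `ζ > 0`,
the predicate `q ζ` holds iff the fixed proposition `qv` does. -/
lemma lamAux_slice (c : ℝ) (q : ℝ → Prop) (qv : Prop) [Decidable qv]
    (hq : ∀ ζ : ℝ, 0 < ζ → (q ζ ↔ qv))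
    (hmeas : MeasurableSet {ζ : ℝ | q ζ ∧ 1 < ζ * c}) :
    lamAux {ζ : ℝ | q ζ ∧ 1 < ζ * c} = if qv then ENNReal.ofReal c else 0 := by
  rw [lamAux_apply _ hmeas]
  rcases le_or_gt c 0 with hc | hc
  · have he : {ζ : ℝ | q ζ ∧ 1 < ζ * c} ∩ Set.Ioi 0 = ∅ := by
      ext ζ; simp only [mem_inter_iff, mem_setOf_eq, mem_Ioi, mem_empty_iff_false, iff_false,
        not_and]
      rintro ⟨-, h1⟩ h2
      nlinarith
    rw [he]
    simp [ENNReal.ofReal_eq_zero.mpr hc]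
  · have hinv : c⁻¹ * c = 1 := inv_mul_cancel₀ hc.ne'
    by_cases hv : qv
    · have he : {ζ : ℝ | q ζ ∧ 1 < ζ * c} ∩ Set.Ioi 0 = Set.Ioi c⁻¹ := by
        ext ζ
        simp only [mem_inter_iff, mem_setOf_eq, mem_Ioi]
        constructor
        · rintro ⟨⟨-, h1⟩, h2⟩
          nlinarith
        · intro h
          have hζ : 0 < ζ := lt_trans (by positivity) h
          exact ⟨⟨(hq ζ hζ).mpr hv, by nlinarith⟩, hζ⟩
      rw [he, lint_Ioi_aux c⁻¹ (by positivity), inv_inv, if_pos hv]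
    · have he : {ζ : ℝ | q ζ ∧ 1 < ζ * c} ∩ Set.Ioi 0 = ∅ := by
        ext ζ; simp only [mem_inter_iff, mem_setOf_eq, mem_Ioi, mem_empty_iff_false, iff_false,
          not_and]
        rintro ⟨hqζ, -⟩ h2
        exact hv ((hq ζ h2).mp hqζ)
      rw [he, if_neg hv]
      simp

lemma f_meas {N : ℕ} : Measurable (fun z : Fin N → ℝ => (∑ i, z i)⁻¹ • z) := by fun_prop

lemma sum_meas {N : ℕ} : Measurable (fun z : Fin N → ℝ => ∑ i, z i) := by fun_prop

lemma Sk_meas {N : ℕ} (k : Fin N) : MeasurableSet {z : Fin N → ℝ | 0 < z k} :=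
  measurableSet_lt measurable_const (measurable_pi_apply k)

lemma hk_meas {N : ℕ} (k : Fin N) : Measurable (fun z : Fin N → ℝ => ENNReal.ofReal (z k)) :=
  (measurable_pi_apply k).ennreal_ofReal

lemma uk_meas {N : ℕ} (k : Fin N) : Measurable (fun z : Fin N → ℝ => (z k)⁻¹ • z) := by fun_prop

/-- The fundamental identity: the spectral measure is `N⁻¹` times the pushforward under
`z ↦ z / ‖z‖` of the measure `‖z‖ · ν`. -/
lemma spectral_eq {N : ℕ} (ν : Measure (Fin N → ℝ)) [SigmaFinite ν] :
    spectralMeasure ν = (N : ℝ≥0∞)⁻¹ •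
      Measure.map (fun z : Fin N → ℝ => (∑ i, z i)⁻¹ • z)
        (ν.withDensity (fun z => ENNReal.ofReal (∑ i, z i))) := by
  classical
  set f : (Fin N → ℝ) → (Fin N → ℝ) := fun z => (∑ i, z i)⁻¹ • z with hfdef
  have hf : Measurable f := f_meas
  have hs : Measurable (fun p : ℝ × (Fin N → ℝ) => p.1 • p.2) :=
    measurable_fst.smul measurable_snd
  have hU : MeasurableSet {z : Fin N → ℝ | 1 < ∑ i, z i} :=
    measurableSet_lt measurable_const sum_meas
  rw [spectralMeasure, exponentMeasure]
  congr 1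
  rw [Measure.restrict_map hs hU, Measure.map_map hf hs]
  have hlam : (((volume : Measure ℝ).restrict (Set.Ioi (0 : ℝ))).withDensity
        (fun ζ => ENNReal.ofReal ((ζ ^ 2)⁻¹))) = lamAux := rfl
  rw [hlam]
  ext B hB
  have hmeasB : MeasurableSet ((f ∘ (fun p : ℝ × (Fin N → ℝ) => p.1 • p.2)) ⁻¹' B ∩
      (fun p : ℝ × (Fin N → ℝ) => p.1 • p.2) ⁻¹' {z : Fin N → ℝ | 1 < ∑ i, z i}) :=
    ((hf.comp hs) hB).inter (hs hU)
  rw [Measure.map_apply (hf.comp hs) hB, Measure.map_apply hf hB,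
    Measure.restrict_apply ((hf.comp hs) hB), Measure.prod_apply_symm hmeasB,
    withDensity_apply _ (hf hB), ← lintegral_indicator (hf hB)]
  apply lintegral_congr
  intro z
  have hslice : (fun ζ => (ζ, z)) ⁻¹' ((f ∘ (fun p : ℝ × (Fin N → ℝ) => p.1 • p.2)) ⁻¹' B ∩
      (fun p : ℝ × (Fin N → ℝ) => p.1 • p.2) ⁻¹' {z : Fin N → ℝ | 1 < ∑ i, z i}) =
      {ζ : ℝ | f (ζ • z) ∈ B ∧ 1 < ζ * ∑ i, z i} := by
    ext ζ
    simp only [mem_preimage, Function.comp_apply, mem_inter_iff, mem_setOf_eq, Pi.smul_apply,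
      smul_eq_mul, ← Finset.mul_sum]
  rw [hslice]
  have hq : ∀ ζ : ℝ, 0 < ζ → (f (ζ • z) ∈ B ↔ f z ∈ B) := by
    intro ζ hζ
    have : f (ζ • z) = f z := by
      simp only [hfdef, Pi.smul_apply, smul_eq_mul, ← Finset.mul_sum, smul_smul]
      congr 1
      rcases eq_or_ne (∑ i, z i) 0 with h0 | h0
      · simp [h0]
      · field_simp
    rw [this]
  rw [lamAux_slice (∑ i, z i) _ (f z ∈ B) hq]
  · simp [Set.indicator_apply]
  · have : {ζ : ℝ | f (ζ • z) ∈ B ∧ 1 < ζ * ∑ i, z i} =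
        ((fun ζ : ℝ => f (ζ • z)) ⁻¹' B) ∩ ((fun ζ : ℝ => ζ * ∑ i, z i) ⁻¹' Set.Ioi 1) := rfl
    rw [this]
    exact ((hf.comp (measurable_id.smul measurable_const)) hB).inter
      ((measurable_id.mul measurable_const) measurableSet_Ioi)

/-- Pushing `P_k` forward by the L¹-normalization map is the same as pushing its
base measure forward, since normalizing is invariant under the scaling `z ↦ z / z_k`. -/
lemma mapf_Pmeas {N : ℕ} (ν : Measure (Fin N → ℝ)) (k : Fin N) :
    Measure.map (fun z : Fin N → ℝ => (∑ i, z i)⁻¹ • z) (Pmeas ν k) =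
    Measure.map (fun z : Fin N → ℝ => (∑ i, z i)⁻¹ • z)
      ((ν.restrict {z : Fin N → ℝ | 0 < z k}).withDensity
        (fun z => ENNReal.ofReal (z k))) := by
  rw [Pmeas, Measure.map_map f_meas (uk_meas k)]
  apply Measure.map_congr
  have h1 : ∀ᵐ z ∂((ν.restrict {z : Fin N → ℝ | 0 < z k}).withDensity
      (fun z => ENNReal.ofReal (z k))), z ∈ {z : Fin N → ℝ | 0 < z k} :=
    (withDensity_absolutelyContinuous _ _).ae_le (ae_restrict_mem (Sk_meas k))
  filter_upwards [h1] with z hz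
  have hzk : z k ≠ 0 := ne_of_gt hz
  show (∑ i, ((z k)⁻¹ • z) i)⁻¹ • ((z k)⁻¹ • z) = (∑ i, z i)⁻¹ • z
  simp only [Pi.smul_apply, smul_eq_mul, ← Finset.mul_sum, smul_smul]
  congr 1
  rcases eq_or_ne (∑ i, z i) 0 with h0 | h0
  · simp [h0]
  · field_simp

/-- The base measures of the `P_k` sum up to `‖z‖ · ν`. -/
lemma sum_mk {N : ℕ} (ν : Measure (Fin N → ℝ)) (hE : ∀ᵐ z ∂ν, ∀ i, 0 ≤ z i) :
    (∑ k : Fin N, (ν.restrict {z : Fin N → ℝ | 0 < z k}).withDensity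
        (fun z => ENNReal.ofReal (z k))) =
      ν.withDensity (fun z => ENNReal.ofReal (∑ i, z i)) := by
  have hterm : ∀ k : Fin N, (ν.restrict {z : Fin N → ℝ | 0 < z k}).withDensity
      (fun z => ENNReal.ofReal (z k)) =
      ν.withDensity ({z : Fin N → ℝ | 0 < z k}.indicator (fun z => ENNReal.ofReal (z k))) :=
    fun k => (withDensity_indicator (Sk_meas k) _).symm
  ext B hB
  rw [Measure.finset_sum_apply, withDensity_apply _ hB]
  have happ : ∀ k : Fin N, (ν.withDensity ({z : Fin N → ℝ | 0 < z k}.indicator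
      (fun z => ENNReal.ofReal (z k)))) B
      = ∫⁻ z in B, {z : Fin N → ℝ | 0 < z k}.indicator (fun z => ENNReal.ofReal (z k)) z ∂ν :=
    fun k => withDensity_apply _ hB
  simp_rw [hterm, happ]
  rw [← lintegral_finset_sum]
  · apply lintegral_congr_ae
    filter_upwards [ae_restrict_of_ae hE] with z hz
    rw [ENNReal.ofReal_sum_of_nonneg (fun i _ => hz i)]
    apply Finset.sum_congr rfl
    intro k _
    by_cases hzk : 0 < z k
    · rw [Set.indicator_of_mem (show z ∈ {z : Fin N → ℝ | 0 < z k} from hzk)]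
    · rw [Set.indicator_of_notMem (show z ∉ {z : Fin N → ℝ | 0 < z k} from hzk), eq_comm,
        ENNReal.ofReal_eq_zero]
      exact le_of_not_gt hzk
  · exact fun k _ => ((hk_meas k).indicator (Sk_meas k))

/-- Pushforward commutes with finite sums of measures. -/
lemma meas_map_finset_sum {α β ι : Type*} [MeasurableSpace α] [MeasurableSpace β]
    {f : α → β} (hf : Measurable f) (s : Finset ι) (μ : ι → Measure α) :
    Measure.map f (∑ i ∈ s, μ i) = ∑ i ∈ s, Measure.map f (μ i) := by
  ext B hB
  rw [Measure.map_apply hf hB, Measure.finset_sum_apply, Measure.finset_sum_apply]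
  exact Finset.sum_congr rfl fun i _ => (Measure.map_apply hf hB).symm

end Aux

/-- Theorem 1 for finite-dimensional distributions. If `T` is uniform on
`{1,…,N}` and, independently, `Y⁽¹⁾,…,Y⁽ᴺ⁾` are independent with `Y⁽ᵏ⁾ ~ P_k`, then the
spectral measure `H` is a probability measure on the L¹-sphere, `‖Y⁽ᵀ⁾‖ ≥ 1` a.s., and
`Y⁽ᵀ⁾ / ‖Y⁽ᵀ⁾‖` has distribution `H`. -/
theorem spectral_measure_simulation (N : ℕ) (hN : 1 ≤ N)
    (ν : Measure (Fin N → ℝ)) [SigmaFinite ν]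
    (hE : ∀ᵐ z ∂ν, ∀ i, 0 ≤ z i)
    (hzero : ν {0} = 0)
    (hmoment : ∀ k : Fin N, ∫⁻ z, ENNReal.ofReal (z k) ∂ν = 1)
    (Ω : Type) [MeasureSpace Ω] [IsProbabilityMeasure (ℙ : Measure Ω)]
    (T : Ω → Fin N) (hT : Measurable T)
    (hTunif : ∀ k : Fin N, ℙ {ω | T ω = k} = (N : ℝ≥0∞)⁻¹)
    (Y : Fin N → Ω → (Fin N → ℝ)) (hYmeas : ∀ k, Measurable (Y k))
    (hYlaw : ∀ k, Measure.map (Y k) ℙ = Pmeas ν k)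
    (hYindep : iIndepFun Y ℙ)
    (hTY : IndepFun T (fun ω k => Y k ω) ℙ) :
    IsProbabilityMeasure (spectralMeasure ν) ∧
    spectralMeasure ν {s : Fin N → ℝ | ∑ i, s i = 1}ᶜ = 0 ∧
    (∀ᵐ ω ∂ℙ, 1 ≤ ∑ i, Y (T ω) ω i) ∧
    Measure.map (fun ω => (∑ i, Y (T ω) ω i)⁻¹ • Y (T ω) ω) ℙ = spectralMeasure ν := by
  classical
  have hf : Measurable (fun z : Fin N → ℝ => (∑ i, z i)⁻¹ • z) := f_meas
  have hNne : (N : ℝ≥0∞) ≠ 0 := Nat.cast_ne_zero.mpr (by omega)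
  have hNtop : (N : ℝ≥0∞) ≠ ⊤ := ENNReal.natCast_ne_top N
  -- total mass of the pushforward of ‖z‖·ν
  have htotal : Measure.map (fun z : Fin N → ℝ => (∑ i, z i)⁻¹ • z)
      (ν.withDensity (fun z => ENNReal.ofReal (∑ i, z i))) Set.univ = N := by
    rw [Measure.map_apply hf MeasurableSet.univ, Set.preimage_univ,
      withDensity_apply _ MeasurableSet.univ, Measure.restrict_univ]
    have : ∫⁻ z, ENNReal.ofReal (∑ i, z i) ∂ν = ∫⁻ z, ∑ k, ENNReal.ofReal (z k) ∂ν := by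
      apply lintegral_congr_ae
      filter_upwards [hE] with z hz
      exact ENNReal.ofReal_sum_of_nonneg (fun i _ => hz i)
    rw [this, lintegral_finset_sum _ (fun k _ => hk_meas k)]
    simp [hmoment]
  -- statement 1
  have h1 : IsProbabilityMeasure (spectralMeasure ν) := by
    constructor
    rw [spectral_eq ν, Measure.smul_apply, htotal, smul_eq_mul,
      ENNReal.inv_mul_cancel hNne hNtop]
  -- statement 2
  have h2 : spectralMeasure ν {s : Fin N → ℝ | ∑ i, s i = 1}ᶜ = 0 := by
    have hSet : MeasurableSet ({s : Fin N → ℝ | ∑ i, s i = 1}ᶜ) :=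
      (measurableSet_eq_fun sum_meas measurable_const).compl
    rw [spectral_eq ν, Measure.smul_apply, Measure.map_apply hf hSet,
      withDensity_apply _ (hf hSet)]
    have hzero' : ∀ᵐ z ∂(ν.restrict ((fun z : Fin N → ℝ => (∑ i, z i)⁻¹ • z) ⁻¹'
        {s : Fin N → ℝ | ∑ i, s i = 1}ᶜ)), ENNReal.ofReal (∑ i, z i) = 0 := by
      filter_upwards [ae_restrict_mem (hf hSet)] with z hz
      simp only [mem_preimage, mem_compl_iff, mem_setOf_eq, Pi.smul_apply, smul_eq_mul,
        ← Finset.mul_sum] at hz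
      rcases eq_or_ne (∑ i, z i) 0 with h0 | h0
      · rw [h0]; simp
      · exact absurd (inv_mul_cancel₀ h0) hz
    rw [lintegral_congr_ae hzero']
    simp
  -- the law of Y^(T)
  have hW : Measurable (fun ω => Y (T ω) ω) := by
    intro B hB
    have hdec : (fun ω => Y (T ω) ω) ⁻¹' B = ⋃ k, ({ω | T ω = k} ∩ Y k ⁻¹' B) := by
      ext ω
      simp only [mem_preimage, mem_iUnion, mem_inter_iff, mem_setOf_eq]
      constructor
      · intro h; exact ⟨T ω, rfl, h⟩
      · rintro ⟨k, hk, hB'⟩; rwa [hk]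
    rw [hdec]
    exact MeasurableSet.iUnion fun k =>
      (hT (measurableSet_singleton k)).inter (hYmeas k hB)
  have hTYk : ∀ k : Fin N, IndepFun T (Y k) ℙ := by
    intro k
    have := hTY.comp measurable_id (measurable_pi_apply k)
    exact this
  have hWlaw : Measure.map (fun ω => Y (T ω) ω) ℙ = (N : ℝ≥0∞)⁻¹ • ∑ k, Pmeas ν k := by
    ext B hB
    rw [Measure.map_apply hW hB, Measure.smul_apply, Measure.finset_sum_apply]
    have hdec : (fun ω => Y (T ω) ω) ⁻¹' B =
        ⋃ k ∈ (Finset.univ : Finset (Fin N)), ({ω | T ω = k} ∩ Y k ⁻¹' B) := by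
      ext ω
      simp only [mem_preimage, Finset.mem_univ, Set.iUnion_true, mem_iUnion, mem_inter_iff,
        mem_setOf_eq]
      constructor
      · intro h; exact ⟨T ω, rfl, h⟩
      · rintro ⟨k, hk, hB'⟩; rwa [hk]
    rw [hdec, measure_biUnion_finset]
    · rw [Finset.smul_sum]
      apply Finset.sum_congr rfl
      intro k _
      have heq : {ω | T ω = k} ∩ Y k ⁻¹' B = T ⁻¹' {k} ∩ Y k ⁻¹' B := rfl
      rw [heq, (hTYk k).measure_inter_preimage_eq_mul {k} B (measurableSet_singleton k) hB]
      have : ℙ (T ⁻¹' {k}) = (N : ℝ≥0∞)⁻¹ := hTunif k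
      rw [this, ← Measure.map_apply (hYmeas k) hB, hYlaw k, smul_eq_mul]
    · intro k _ l _ hkl
      simp only [Function.onFun]
      apply Set.disjoint_left.mpr
      rintro ω ⟨h1, -⟩ ⟨h2, -⟩
      exact hkl (h1 ▸ h2 ▸ rfl)
    · intro k _
      exact (hT (measurableSet_singleton k)).inter (hYmeas k hB)
  -- statement 3
  have h3 : ∀ᵐ ω ∂ℙ, 1 ≤ ∑ i, Y (T ω) ω i := by
    have hC : MeasurableSet {x : Fin N → ℝ | ∑ i, x i < 1} :=
      measurableSet_lt sum_meas measurable_const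
    rw [ae_iff]
    have hset : {ω | ¬ 1 ≤ ∑ i, Y (T ω) ω i} =
        (fun ω => Y (T ω) ω) ⁻¹' {x : Fin N → ℝ | ∑ i, x i < 1} := by
      ext ω; simp [not_le]
    rw [hset, ← Measure.map_apply hW hC, hWlaw, Measure.smul_apply,
      Measure.finset_sum_apply]
    have hPk0 : ∀ k : Fin N, Pmeas ν k {x : Fin N → ℝ | ∑ i, x i < 1} = 0 := by
      intro k
      rw [Pmeas, Measure.map_apply (uk_meas k) hC]
      have hae : ∀ᵐ z ∂((ν.restrict {z : Fin N → ℝ | 0 < z k}).withDensity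
          (fun z => ENNReal.ofReal (z k))),
          z ∉ (fun z : Fin N → ℝ => (z k)⁻¹ • z) ⁻¹' {x : Fin N → ℝ | ∑ i, x i < 1} := by
        have hmem : ∀ᵐ z ∂((ν.restrict {z : Fin N → ℝ | 0 < z k}).withDensity
            (fun z => ENNReal.ofReal (z k))), z ∈ {z : Fin N → ℝ | 0 < z k} :=
          (withDensity_absolutelyContinuous _ _).ae_le (ae_restrict_mem (Sk_meas k))
        have hnn : ∀ᵐ z ∂((ν.restrict {z : Fin N → ℝ | 0 < z k}).withDensity
            (fun z => ENNReal.ofReal (z k))), ∀ i, 0 ≤ z i :=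
          (withDensity_absolutelyContinuous _ _).ae_le (ae_restrict_of_ae hE)
        filter_upwards [hmem, hnn] with z hz hzn
        simp only [mem_preimage, mem_setOf_eq, Pi.smul_apply, smul_eq_mul, ← Finset.mul_sum,
          not_lt]
        have hk_le : z k ≤ ∑ i, z i :=
          Finset.single_le_sum (fun i _ => hzn i) (Finset.mem_univ k)
        calc (1:ℝ) = (z k)⁻¹ * z k := (inv_mul_cancel₀ (ne_of_gt hz)).symm
          _ ≤ (z k)⁻¹ * ∑ i, z i := by
              apply mul_le_mul_of_nonneg_left hk_le
              positivity
      exact measure_eq_zero_iff_ae_notMem.mpr hae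
    simp [hPk0]
  -- statement 4
  have h4 : Measure.map (fun ω => (∑ i, Y (T ω) ω i)⁻¹ • Y (T ω) ω) ℙ = spectralMeasure ν := by
    have hcomp : (fun ω => (∑ i, Y (T ω) ω i)⁻¹ • Y (T ω) ω) =
        (fun z : Fin N → ℝ => (∑ i, z i)⁻¹ • z) ∘ (fun ω => Y (T ω) ω) := rfl
    rw [hcomp, ← Measure.map_map hf hW, hWlaw, Measure.map_smul,
      meas_map_finset_sum hf]
    have : ∀ k : Fin N, Measure.map (fun z : Fin N → ℝ => (∑ i, z i)⁻¹ • z) (Pmeas ν k) =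
        Measure.map (fun z : Fin N → ℝ => (∑ i, z i)⁻¹ • z)
          ((ν.restrict {z : Fin N → ℝ | 0 < z k}).withDensity
            (fun z => ENNReal.ofReal (z k))) := fun k => mapf_Pmeas ν k
    simp_rw [this]
    rw [← meas_map_finset_sum hf, sum_mk ν hE, ← spectral_eq ν]
  exact ⟨h1, h2, h3, h4⟩
end

section
/- Let N ≥ 1, E = [0,∞)^N, let ν be a σ-finite Borel measure on E, fix k₀ ∈ {1,…,N}, and assume ∫_E z_{k₀} ν(dz) = 1. Define the exponent measure μ(A) = ∫_E ∫_0^∞ 1{ζz ∈ A} ζ^{-2} dζ ν(dz) and the probability measure P(A) = ∫_E 1{z_{k₀} > 0} 1{z/z_{k₀} ∈ A} z_{k₀} ν(dz). Then for every Borel set A ⊆ E, ∫_E ∫_0^∞ 1{ζy ∈ A} ζ^{-2} dζ P(dy) = μ(A ∩ {z ∈ E : z_{k₀} > 0}). -/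
open MeasureTheory Set ProbabilityTheory
open scoped ENNReal

noncomputable def Kfun {N : ℕ} (A : Set (Fin N → ℝ)) (z : Fin N → ℝ) : ℝ≥0∞ :=
  ∫⁻ ζ in Set.Ioi (0 : ℝ),
    ENNReal.ofReal ((ζ ^ 2)⁻¹) * A.indicator (fun _ => (1 : ℝ≥0∞)) (ζ • z)

variable {N : ℕ}

lemma meas_smul : Measurable (fun p : ℝ × (Fin N → ℝ) => p.1 • p.2) :=
  (continuous_fst.smul continuous_snd).measurable

lemma meas_dens : Measurable (fun ζ : ℝ => ENNReal.ofReal ((ζ ^ 2)⁻¹)) :=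
  ((measurable_id.pow_const 2).inv).ennreal_ofReal

lemma meas_integrand {A : Set (Fin N → ℝ)} (hA : MeasurableSet A) :
    Measurable (fun q : (Fin N → ℝ) × ℝ =>
      ENNReal.ofReal ((q.2 ^ 2)⁻¹) * A.indicator (fun _ => (1 : ℝ≥0∞)) (q.2 • q.1)) := by
  apply (meas_dens.comp measurable_snd).mul
  exact (measurable_const.indicator hA).comp (measurable_snd.smul measurable_fst)

lemma Kfun_measurable {A : Set (Fin N → ℝ)} (hA : MeasurableSet A) :
    Measurable (Kfun A) :=
  (meas_integrand hA).lintegral_prod_right'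

lemma exponentMeasure_eq_lintegral (σ : Measure (Fin N → ℝ)) [SFinite σ]
    {A : Set (Fin N → ℝ)} (hA : MeasurableSet A) :
    exponentMeasure σ A = ∫⁻ z, Kfun A z ∂σ := by
  rw [exponentMeasure, Measure.map_apply meas_smul hA, Measure.prod_apply_symm (meas_smul hA)]
  refine lintegral_congr fun z => ?_
  have ht : MeasurableSet {ζ : ℝ | ζ • z ∈ A} :=
    (meas_smul.comp (measurable_id.prodMk measurable_const)) hA
  have : ((fun ζ : ℝ => (ζ, z)) ⁻¹' ((fun p : ℝ × (Fin N → ℝ) => p.1 • p.2) ⁻¹' A))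
      = {ζ : ℝ | ζ • z ∈ A} := rfl
  rw [this, withDensity_apply _ ht, Kfun]
  rw [← lintegral_indicator ht]
  refine setLIntegral_congr_fun measurableSet_Ioi (fun ζ hζ => ?_)
  by_cases h : ζ • z ∈ A <;> simp [Set.indicator_apply, h]

lemma lintegral_Ioi_comp_mul_left {c : ℝ} (hc : 0 < c) {h : ℝ → ℝ≥0∞}
    (hh : Measurable h) :
    ∫⁻ ζ in Set.Ioi (0 : ℝ), h (c * ζ) = ENNReal.ofReal c⁻¹ * ∫⁻ u in Set.Ioi (0 : ℝ), h u := by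
  have hc0 : c ≠ 0 := ne_of_gt hc
  have hpre : (fun x : ℝ => c * x) ⁻¹' Set.Ioi (0 : ℝ) = Set.Ioi (0 : ℝ) := by
    ext x; simp [Set.mem_Ioi, mul_pos_iff_of_pos_left hc]
  have hmap : Measure.map (fun x : ℝ => c * x) ((volume : Measure ℝ).restrict (Set.Ioi 0))
      = ENNReal.ofReal c⁻¹ • ((volume : Measure ℝ).restrict (Set.Ioi 0)) := by
    rw [← hpre, ← Measure.restrict_map (measurable_const_mul c) measurableSet_Ioi,
      Real.map_volume_mul_left hc0, Measure.restrict_smul, hpre,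
      abs_of_pos (inv_pos.mpr hc)]
  calc ∫⁻ ζ in Set.Ioi (0 : ℝ), h (c * ζ)
      = ∫⁻ u, h u ∂(Measure.map (fun x : ℝ => c * x)
          ((volume : Measure ℝ).restrict (Set.Ioi 0))) := by
        rw [lintegral_map hh (measurable_const_mul c)]
    _ = ENNReal.ofReal c⁻¹ * ∫⁻ u in Set.Ioi (0 : ℝ), h u := by
        rw [hmap, lintegral_smul_measure, smul_eq_mul]

lemma Kfun_smul {A : Set (Fin N → ℝ)} (hA : MeasurableSet A) {c : ℝ} (hc : 0 < c)
    (z : Fin N → ℝ) : Kfun A (c • z) = ENNReal.ofReal c * Kfun A z := by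
  have hc0 : c ≠ 0 := ne_of_gt hc
  set h : ℝ → ℝ≥0∞ := fun u =>
    ENNReal.ofReal ((u ^ 2)⁻¹) * A.indicator (fun _ => (1 : ℝ≥0∞)) (u • z) with hh_def
  have hh : Measurable h :=
    (meas_integrand hA).comp (measurable_const.prodMk measurable_id)
  have step1 : Kfun A (c • z) = ∫⁻ ζ in Set.Ioi (0 : ℝ), ENNReal.ofReal (c ^ 2) * h (c * ζ) := by
    refine setLIntegral_congr_fun measurableSet_Ioi
      (fun ζ hζ => ?_)
    have hζ0 : (0 : ℝ) < ζ := hζ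
    have h1 : ζ • (c • z) = (c * ζ) • z := by rw [smul_smul, mul_comm]
    have h2 : ENNReal.ofReal ((ζ ^ 2)⁻¹)
        = ENNReal.ofReal (c ^ 2) * ENNReal.ofReal (((c * ζ) ^ 2)⁻¹) := by
      rw [← ENNReal.ofReal_mul (by positivity)]
      congr 1
      field_simp
    simp only [hh_def, h1, h2, mul_assoc]
  have hcc : Measurable fun ζ : ℝ => h (c * ζ) := hh.comp (measurable_const_mul c)
  rw [step1, lintegral_const_mul _ hcc,
    lintegral_Ioi_comp_mul_left hc hh, ← mul_assoc,
    ← ENNReal.ofReal_mul (by positivity)]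
  have : c ^ 2 * c⁻¹ = c := by field_simp
  rw [this]
  rfl

/-- Proposition 3, finite-dimensional version: the exponent measure built
from the angular part `P = P_{k₀}` coincides with the exponent measure of `ν` restricted
to the set where the `k₀`-th coordinate is positive:
`∫_E ∫_0^∞ 1{ζy ∈ A} ζ⁻² dζ P(dy) = μ(A ∩ {z : z_{k₀} > 0})`. -/
theorem exponentMeasure_of_Pmeas (N : ℕ) (hN : 1 ≤ N)
    (ν : Measure (Fin N → ℝ)) [SigmaFinite ν]
    (k₀ : Fin N)
    (hmoment : ∫⁻ z, ENNReal.ofReal (z k₀) ∂ν = 1)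
    (A : Set (Fin N → ℝ)) (hA : MeasurableSet A) :
    exponentMeasure (Pmeas ν k₀) A
      = exponentMeasure ν (A ∩ {z : Fin N → ℝ | 0 < z k₀}) := by
  set S : Set (Fin N → ℝ) := {z : Fin N → ℝ | 0 < z k₀} with hS_def
  have hS : MeasurableSet S := measurableSet_lt measurable_const (measurable_pi_apply k₀)
  have hg : Measurable fun z : Fin N → ℝ => (z k₀)⁻¹ • z :=
    ((measurable_pi_apply k₀).inv).smul measurable_id
  have hdens : Measurable fun z : Fin N → ℝ => ENNReal.ofReal (z k₀) :=
    (measurable_pi_apply k₀).ennreal_ofReal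
  haveI : SFinite (Pmeas ν k₀) := by
    rw [Pmeas]; infer_instance
  rw [exponentMeasure_eq_lintegral _ hA, exponentMeasure_eq_lintegral _ (hA.inter hS)]
  have lhs_eq : ∫⁻ y, Kfun A y ∂(Pmeas ν k₀) = ∫⁻ z in S, Kfun A z ∂ν := by
    have hKg : Measurable fun z : Fin N → ℝ => Kfun A ((z k₀)⁻¹ • z) :=
      (Kfun_measurable hA).comp hg
    rw [Pmeas, lintegral_map (Kfun_measurable hA) hg,
      lintegral_withDensity_eq_lintegral_mul _ hdens hKg]
    refine setLIntegral_congr_fun hS (fun z hz => ?_)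
    have hz0 : (0 : ℝ) < z k₀ := hz
    have : Kfun A ((z k₀)⁻¹ • z) = ENNReal.ofReal (z k₀)⁻¹ * Kfun A z :=
      Kfun_smul hA (inv_pos.mpr hz0) z
    simp only [Pi.mul_apply, Function.comp, this, ← mul_assoc,
      ← ENNReal.ofReal_mul (le_of_lt hz0), mul_inv_cancel₀ (ne_of_gt hz0),
      ENNReal.ofReal_one, one_mul]
  have rhs_eq : ∫⁻ z, Kfun (A ∩ S) z ∂ν = ∫⁻ z in S, Kfun A z ∂ν := by
    rw [← lintegral_indicator hS]
    refine lintegral_congr fun z => ?_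
    by_cases hz : z ∈ S
    · rw [Set.indicator_of_mem hz]
      refine setLIntegral_congr_fun measurableSet_Ioi
        (fun ζ hζ => ?_)
      have hζ0 : (0 : ℝ) < ζ := hζ
      have hmem : ζ • z ∈ S := by
        simp only [hS_def, Set.mem_setOf_eq, Pi.smul_apply, smul_eq_mul] at hz ⊢
        exact mul_pos hζ0 hz
      by_cases hAz : ζ • z ∈ A <;>
        simp [Set.indicator_apply, hAz, hmem]
    · rw [Set.indicator_of_notMem hz]
      rw [Kfun, ← lintegral_zero (μ := (volume : Measure ℝ).restrict (Set.Ioi 0))]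
      refine setLIntegral_congr_fun measurableSet_Ioi
        (fun ζ hζ => ?_)
      have hζ0 : (0 : ℝ) < ζ := hζ
      have hmem : ζ • z ∉ S := by
        simp only [hS_def, Set.mem_setOf_eq, Pi.smul_apply, smul_eq_mul,
          not_lt] at hz ⊢
        exact mul_nonpos_of_nonneg_of_nonpos (le_of_lt hζ0) hz
      have : ζ • z ∉ A ∩ S := fun h => hmem h.2
      simp [Set.indicator_of_notMem this]
  rw [lhs_eq, rhs_eq]
end

section
/- Let N ≥ 1, let G = (G_0,…,G_N) be a vector of N+1 independent standard Gaussian random variables, let L be a real (N+1)×(N+1) matrix, set W = L·G and c = L·Lᵀ, and write σ_i² = c_{ii}. Then for every Borel set A ⊆ (0,∞)^N, E[ exp(W_0 − σ_0²/2) · 1{ (exp(W_i − σ_i²/2 − W_0 + σ_0²/2))_{i=1,…,N} ∈ A } ] = P[ (exp(W_i − W_0 − (σ_i² + σ_0² − 2c_{i0})/2))_{i=1,…,N} ∈ A ]. In other words, the measure P_{x_0} of the Brown–Resnick type model, restricted to the evaluations at x_1,…,x_N, equals the law of the log-normal vector (exp(W_i − W_0 − Var(W_i − W_0)/2))_{i=1,…,N}.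 -/
open MeasureTheory ProbabilityTheory Matrix Set
open scoped ENNReal

/-- Tonelli for a product of functions of separate coordinates over a finite
product of probability measures on `ℝ`. -/
lemma lintegral_fin_pi_prod_aux : ∀ (n : ℕ) (μ : Fin n → Measure ℝ),
    (∀ i, IsProbabilityMeasure (μ i)) → ∀ (f : Fin n → ℝ → ℝ≥0∞),
    (∀ i, Measurable (f i)) →
    ∫⁻ x : Fin n → ℝ, ∏ i, f i (x i) ∂(Measure.pi μ) = ∏ i, ∫⁻ x, f i x ∂(μ i) := by
  intro n
  induction n with
  | zero =>
      intro μ hμ f hf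
      simp [lintegral_const]
  | succ n ih =>
      intro μ hμ f hf
      have h := (measurePreserving_piFinSuccAbove μ 0).symm
        (MeasurableEquiv.piFinSuccAbove (fun _ : Fin (n + 1) => ℝ) 0)
      have hmeas : Measurable fun x : Fin (n + 1) → ℝ => ∏ i, f i (x i) :=
        Finset.measurable_prod _ fun i _ => (hf i).comp (measurable_pi_apply i)
      rw [← h.map_eq, lintegral_map hmeas (MeasurableEquiv.measurable _)]
      have heq : ∀ y : ℝ × (Fin n → ℝ),
          (∏ i, f i
            ((MeasurableEquiv.piFinSuccAbove (fun _ : Fin (n + 1) => ℝ) 0).symm y i))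
          = f 0 y.1 * ∏ j : Fin n, f j.succ (y.2 j) := by
        intro y
        have hy : ∀ i, (MeasurableEquiv.piFinSuccAbove
            (fun _ : Fin (n + 1) => ℝ) 0).symm y i
            = (Fin.cons y.1 y.2 : ∀ _ : Fin (n + 1), ℝ) i := by
          intro i
          simp [MeasurableEquiv.piFinSuccAbove, Fin.insertNthEquiv,
            Fin.insertNth_zero]
        simp_rw [hy]
        rw [Fin.prod_univ_succ]
        simp
      simp_rw [heq]
      have h1 : AEMeasurable (fun x : ℝ => f 0 x)
          ((μ 0)) := (hf 0).aemeasurable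
      have h2 : AEMeasurable (fun y : Fin n → ℝ => ∏ j : Fin n, f j.succ (y j))
          (Measure.pi fun j => μ j.succ) :=
        (Finset.measurable_prod _ fun j _ =>
          (hf j.succ).comp (measurable_pi_apply j)).aemeasurable
      have := lintegral_prod_mul (μ := μ 0)
        (ν := Measure.pi fun j : Fin n => μ (Fin.succAbove 0 j)) h1 (by
          simpa [Fin.zero_succAbove] using h2)
      simp only [Fin.zero_succAbove] at this ⊢
      rw [this, ih (fun j => μ j.succ) (fun j => hμ j.succ)
        (fun j => f j.succ) (fun j => hf j.succ), Fin.prod_univ_succ]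

/-- One-dimensional exponential tilt of the standard Gaussian. -/
lemma gaussianReal_tilt (t : ℝ) :
    (gaussianReal 0 1).withDensity
      (fun x => ENNReal.ofReal (Real.exp (t * x - t ^ 2 / 2))) = gaussianReal t 1 := by
  rw [gaussianReal_of_var_ne_zero 0 one_ne_zero, gaussianReal_of_var_ne_zero t one_ne_zero,
    ← withDensity_mul _ (measurable_gaussianPDF 0 1)
      (by exact (Real.measurable_exp.comp (by fun_prop)).ennreal_ofReal)]
  congr 1
  funext x
  simp only [Pi.mul_apply, gaussianPDF, gaussianPDFReal]
  rw [← ENNReal.ofReal_mul (by positivity)]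
  congr 1
  push_cast
  rw [mul_assoc, ← Real.exp_add]
  congr 2
  ring

/-- The exponential tilt of a standard Gaussian product measure is the shifted
Gaussian product measure. -/
lemma pi_gaussian_tilt (n : ℕ) (a : Fin n → ℝ) :
    (Measure.pi fun _ : Fin n => gaussianReal 0 1).withDensity
      (fun g => ∏ i, ENNReal.ofReal (Real.exp (a i * g i - (a i) ^ 2 / 2)))
      = Measure.pi (fun i => gaussianReal (a i) 1) := by
  refine (Measure.pi_eq fun s hs => ?_).symm
  have hd : ∀ i : Fin n, Measurable fun x : ℝ =>
      ENNReal.ofReal (Real.exp (a i * x - (a i) ^ 2 / 2)) :=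
    fun i => (Real.measurable_exp.comp (by fun_prop)).ennreal_ofReal
  rw [withDensity_apply _ (MeasurableSet.univ_pi hs),
    ← lintegral_indicator (MeasurableSet.univ_pi hs)]
  have hind : ∀ g : Fin n → ℝ,
      (univ.pi s).indicator
        (fun g => ∏ i, ENNReal.ofReal (Real.exp (a i * g i - (a i) ^ 2 / 2))) g
      = ∏ i, (s i).indicator
          (fun x => ENNReal.ofReal (Real.exp (a i * x - (a i) ^ 2 / 2))) (g i) := by
    intro g
    by_cases hg : g ∈ univ.pi s
    · rw [Set.indicator_of_mem hg]
      exact Finset.prod_congr rfl fun i _ =>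
        (Set.indicator_of_mem (hg i (Set.mem_univ i))
          (fun x => ENNReal.ofReal (Real.exp (a i * x - (a i) ^ 2 / 2)))).symm
    · rw [Set.indicator_of_notMem hg]
      obtain ⟨i, hi⟩ : ∃ i, g i ∉ s i := by simpa [Set.mem_pi] using hg
      exact (Finset.prod_eq_zero (Finset.mem_univ i)
        (Set.indicator_of_notMem hi _)).symm
  simp_rw [hind]
  rw [lintegral_fin_pi_prod_aux n _ (fun _ => inferInstance) _
    (fun i => (hd i).indicator (hs i))]
  refine Finset.prod_congr rfl fun i _ => ?_
  rw [lintegral_indicator (hs i), ← withDensity_apply _ (hs i), gaussianReal_tilt]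

/-- The shifted Gaussian product measure is the translate of the standard one. -/
lemma pi_gaussian_shift (n : ℕ) (a : Fin n → ℝ) :
    Measure.pi (fun i : Fin n => gaussianReal (a i) 1)
      = Measure.map (fun g i => g i + a i)
          (Measure.pi fun _ : Fin n => gaussianReal 0 1) := by
  have h := measurePreserving_pi (fun _ : Fin n => gaussianReal 0 1)
    (fun i => gaussianReal (a i) 1) (f := fun i x => x + a i)
    (fun i => ⟨measurable_add_const _, by
      simpa using gaussianReal_map_add_const (μ := 0) (v := 1) (a i)⟩)
  exact h.map_eq.symm

/-- Proposition 7, Brown–Resnick model, finite-dimensional version: with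
`W = L·G` a centered Gaussian vector (law `γ`) with covariance `c = L·Lᵀ` and
`σᵢ² = cᵢᵢ`, for every Borel `A ⊆ (0,∞)^N`,
`E[exp(W₀ − σ₀²/2) · 1{(exp(Wᵢ − σᵢ²/2 − W₀ + σ₀²/2))ᵢ ∈ A}]
  = P[(exp(Wᵢ − W₀ − (σᵢ² + σ₀² − 2cᵢ₀)/2))ᵢ ∈ A]`. -/
theorem brownResnick_Pmeasure (N : ℕ) (hN : 1 ≤ N)
    (L : Matrix (Fin (N + 1)) (Fin (N + 1)) ℝ)
    (A : Set (Fin N → ℝ)) (hA : MeasurableSet A)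
    (hApos : A ⊆ {v : Fin N → ℝ | ∀ i, 0 < v i}) :
    let γ : Measure (Fin (N + 1) → ℝ) :=
      Measure.map (fun g => L.mulVec g)
        (Measure.pi fun _ : Fin (N + 1) => gaussianReal 0 1)
    let c : Matrix (Fin (N + 1)) (Fin (N + 1)) ℝ := L * Lᵀ
    ∫⁻ w, Set.indicator
        {w : Fin (N + 1) → ℝ |
          (fun i : Fin N =>
            Real.exp (w i.succ - c i.succ i.succ / 2 - w 0 + c 0 0 / 2)) ∈ A}
        (fun w => ENNReal.ofReal (Real.exp (w 0 - c 0 0 / 2))) w ∂γ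
      = γ {w : Fin (N + 1) → ℝ |
          (fun i : Fin N =>
            Real.exp (w i.succ - w 0 -
              (c i.succ i.succ + c 0 0 - 2 * c i.succ 0) / 2)) ∈ A} := by
  intro γ c
  set μpi : Measure (Fin (N + 1) → ℝ) :=
    Measure.pi fun _ : Fin (N + 1) => gaussianReal 0 1 with hμpi
  set a : Fin (N + 1) → ℝ := fun j => L 0 j with ha
  -- basic measurability
  have hmul : Measurable fun g : Fin (N + 1) → ℝ => L.mulVec g := by
    refine measurable_pi_lambda _ fun i => ?_
    simp only [Matrix.mulVec, dotProduct]
    exact Finset.measurable_sum _ fun j _ => (measurable_pi_apply j).const_mul _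
  have hφ : Measurable fun w : Fin (N + 1) → ℝ =>
      (fun i : Fin N =>
        Real.exp (w i.succ - c i.succ i.succ / 2 - w 0 + c 0 0 / 2)) := by
    refine measurable_pi_lambda _ fun i => Real.measurable_exp.comp ?_
    fun_prop
  have hψ : Measurable fun w : Fin (N + 1) → ℝ =>
      (fun i : Fin N =>
        Real.exp (w i.succ - w 0 -
          (c i.succ i.succ + c 0 0 - 2 * c i.succ 0) / 2)) := by
    refine measurable_pi_lambda _ fun i => Real.measurable_exp.comp ?_
    fun_prop
  set S : Set (Fin (N + 1) → ℝ) :=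
    {w | (fun i : Fin N =>
      Real.exp (w i.succ - c i.succ i.succ / 2 - w 0 + c 0 0 / 2)) ∈ A} with hS
  set S' : Set (Fin (N + 1) → ℝ) :=
    {w | (fun i : Fin N =>
      Real.exp (w i.succ - w 0 -
        (c i.succ i.succ + c 0 0 - 2 * c i.succ 0) / 2)) ∈ A} with hS'
  have hSm : MeasurableSet S := hφ hA
  have hS'm : MeasurableSet S' := hψ hA
  set f : (Fin (N + 1) → ℝ) → ℝ≥0∞ :=
    fun w => ENNReal.ofReal (Real.exp (w 0 - c 0 0 / 2)) with hf
  have hfm : Measurable f :=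
    (Real.measurable_exp.comp (by fun_prop)).ennreal_ofReal
  set D : (Fin (N + 1) → ℝ) → ℝ≥0∞ :=
    fun g => ∏ j, ENNReal.ofReal (Real.exp (a j * g j - (a j) ^ 2 / 2)) with hD
  have hDm : Measurable D :=
    Finset.measurable_prod _ fun j _ =>
      (Real.measurable_exp.comp (by fun_prop)).ennreal_ofReal
  set T : Set (Fin (N + 1) → ℝ) := (fun g => L.mulVec g) ⁻¹' S with hT
  have hTm : MeasurableSet T := hmul hSm
  -- key algebraic identities
  have hc00 : c 0 0 = ∑ j, a j ^ 2 := by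
    simp [c, Matrix.mul_apply, Matrix.transpose_apply, a, pow_two]
  have hmul0 : ∀ g : Fin (N + 1) → ℝ, L.mulVec g 0 = ∑ j, a j * g j := by
    intro g; simp [Matrix.mulVec, dotProduct, a]
  have hDval : ∀ g : Fin (N + 1) → ℝ, D g = f (L.mulVec g) := by
    intro g
    show (∏ j, ENNReal.ofReal (Real.exp (a j * g j - (a j) ^ 2 / 2)))
      = ENNReal.ofReal (Real.exp (L.mulVec g 0 - c 0 0 / 2))
    have h1 : ∀ j : Fin (N + 1), (0:ℝ) ≤ Real.exp (a j * g j - (a j) ^ 2 / 2) :=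
      fun j => (Real.exp_pos _).le
    rw [← ENNReal.ofReal_prod_of_nonneg (fun j _ => h1 j), ← Real.exp_sum]
    congr 1
    rw [Finset.sum_sub_distrib, hmul0 g, hc00, Finset.sum_div]
  -- step 1: transfer to μpi
  have step1 : ∫⁻ w, S.indicator f w ∂γ = ∫⁻ g, D g * T.indicator (fun _ => (1 : ℝ≥0∞)) g ∂μpi := by
    rw [show γ = μpi.map (fun g => L.mulVec g) from rfl,
      lintegral_map (hfm.indicator hSm) hmul]
    refine lintegral_congr fun g => ?_
    by_cases hg : L.mulVec g ∈ S
    · rw [Set.indicator_of_mem hg,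
        Set.indicator_of_mem (show g ∈ T from hg), mul_one, hDval g]
    · rw [Set.indicator_of_notMem hg,
        Set.indicator_of_notMem (show g ∉ T from hg), mul_zero]
  -- step 2: change of measure
  have step2 : ∫⁻ g, D g * T.indicator (fun _ => (1 : ℝ≥0∞)) g ∂μpi
      = ∫⁻ g, T.indicator (fun _ => (1 : ℝ≥0∞)) g ∂(μpi.withDensity D) :=
    (lintegral_withDensity_eq_lintegral_mul μpi hDm
      (measurable_const.indicator hTm)).symm
  -- step 3: the tilted measure is the translated one
  have step3 : μpi.withDensity D
      = Measure.map (fun g i => g i + a i) μpi := by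
    rw [hμpi, hD]
    rw [pi_gaussian_tilt (N + 1) a, pi_gaussian_shift (N + 1) a]
  -- step 4: compute
  have hshiftm : Measurable fun g : Fin (N + 1) → ℝ => fun i => g i + a i := by
    fun_prop
  have step4 : ∫⁻ g, T.indicator (fun _ => (1 : ℝ≥0∞)) g ∂(Measure.map (fun g i => g i + a i) μpi)
      = μpi ((fun g : Fin (N + 1) → ℝ => fun i => g i + a i) ⁻¹' T) := by
    rw [lintegral_map (measurable_const.indicator hTm) hshiftm]
    rw [← lintegral_indicator_one (hshiftm hTm)]
    refine lintegral_congr fun g => ?_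
    by_cases hg : (fun i => g i + a i) ∈ T
    · rw [Set.indicator_of_mem hg, Set.indicator_of_mem
        (show g ∈ (fun g : Fin (N + 1) → ℝ => fun i => g i + a i) ⁻¹' T from hg)]
      rfl
    · rw [Set.indicator_of_notMem hg, Set.indicator_of_notMem
        (show g ∉ (fun g : Fin (N + 1) → ℝ => fun i => g i + a i) ⁻¹' T from hg)]
  -- the two preimages coincide
  have hLa : ∀ j : Fin (N + 1), L.mulVec a j = c j 0 := by
    intro j
    simp [Matrix.mulVec, dotProduct, c, Matrix.mul_apply,
      Matrix.transpose_apply, a]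
  have hsets : (fun g : Fin (N + 1) → ℝ => fun i => g i + a i) ⁻¹' T
      = (fun g => L.mulVec g) ⁻¹' S' := by
    ext g
    have hlin : ∀ j : Fin (N + 1),
        L.mulVec (fun i => g i + a i) j = L.mulVec g j + c j 0 := by
      intro j
      rw [← hLa j]
      simp [Matrix.mulVec, dotProduct, mul_add, Finset.sum_add_distrib]
    simp only [Set.mem_preimage, hT, Set.mem_preimage, hS, hS', Set.mem_setOf_eq]
    have hfun : (fun i : Fin N =>
        Real.exp (L.mulVec (fun i => g i + a i) i.succ - c i.succ i.succ / 2 -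
          L.mulVec (fun i => g i + a i) 0 + c 0 0 / 2))
        = (fun i : Fin N =>
          Real.exp (L.mulVec g i.succ - L.mulVec g 0 -
            (c i.succ i.succ + c 0 0 - 2 * c i.succ 0) / 2)) := by
      funext i
      rw [hlin i.succ, hlin 0]
      congr 1
      ring
    rw [hfun]
  -- conclude
  rw [step1, step2, step3, step4, hsets,
    show γ = μpi.map (fun g => L.mulVec g) from rfl,
    Measure.map_apply hmul hS'm]
end

section
/- Let k ≥ 1, α > 0, and set c_α = √π · 2^{−(α−2)/2} / Γ((1+α)/2). Let Σ̃ be a symmetric positive definite (k+1)×(k+1) real matrix with Σ̃_{00} = 1, and let g̃(y) = (2π)^{−(k+1)/2} det(Σ̃)^{−1/2} exp(−yᵀ Σ̃^{−1} y / 2) for y ∈ ℝ^{k+1} be the corresponding Gaussian density. Write Σ_k = (Σ̃_{ij})_{1≤i,j≤k}, μ = (Σ̃_{10},…,Σ̃_{k0}) ∈ ℝ^k, and Σ̂ = (Σ_k − μμᵀ)/(α+1), and assume Σ̂ is positive definite. Then for every z ∈ ℝ^k, ∫_0^∞ c_α · y_0^{k+α} · g̃(y_0, y_0 z_1, …, y_0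 z_k) dy_0 = π^{−k/2} (α+1)^{−k/2} · [Γ((k+α+1)/2)/Γ((α+1)/2)] · det(Σ̂)^{−1/2} · (1 + (z−μ)ᵀ Σ̂^{−1} (z−μ)/(α+1))^{−(α+k+1)/2}, i.e. the left-hand side is the density at z of the k-variate Student distribution with α+1 degrees of freedom, location μ and scale matrix Σ̂. -/
open MeasureTheory Matrix Set Real

section Aux

def eqv (k : ℕ) : (Fin 1 ⊕ Fin k) ≃ Fin (k + 1) :=
  finSumFinEquiv.trans (finCongr (Nat.add_comm 1 k))

lemma eqv_inl (k : ℕ) (i : Fin 1) : eqv k (Sum.inl i) = 0 := by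
  ext; simp [eqv, Fin.val_eq_zero i]

lemma eqv_inr (k : ℕ) (i : Fin k) : eqv k (Sum.inr i) = i.succ := by
  ext; simp [eqv, Nat.add_comm 1 i.val]

variable {k : ℕ} (S : Matrix (Fin (k + 1)) (Fin (k + 1)) ℝ)

noncomputable def Bm : Matrix (Fin 1) (Fin k) ℝ := Matrix.of fun _ j => S j.succ 0
noncomputable def Cm : Matrix (Fin k) (Fin 1) ℝ := Matrix.of fun i _ => S i.succ 0
noncomputable def Wm : Matrix (Fin k) (Fin k) ℝ :=
  S.submatrix Fin.succ Fin.succ - vecMulVec (fun i => S i.succ 0) (fun i => S i.succ 0)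

lemma CB_eq : Cm S * Bm S = vecMulVec (fun i => S i.succ 0) (fun i => S i.succ 0) := by
  ext i j; simp [Cm, Bm, Matrix.mul_apply, vecMulVec_apply]

lemma submatrix_eqv (hS00 : S 0 0 = 1) (hSsymm : S.IsSymm) :
    S.submatrix (eqv k) (eqv k) =
      fromBlocks 1 (Bm S) (Cm S) (S.submatrix Fin.succ Fin.succ) := by
  ext i j
  rcases i with i | i <;> rcases j with j | j
  · simp [Matrix.submatrix_apply, eqv_inl, fromBlocks, Subsingleton.elim i j,
      Matrix.one_apply_eq, hS00]
  · simp only [Matrix.submatrix_apply, eqv_inl, eqv_inr, fromBlocks_apply₁₂, Bm,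
      Matrix.of_apply]
    rw [← hSsymm.apply]
  · simp [Matrix.submatrix_apply, eqv_inl, eqv_inr, fromBlocks, Cm]
  · simp [Matrix.submatrix_apply, eqv_inr, fromBlocks]

lemma det_eq (hS00 : S 0 0 = 1) (hSsymm : S.IsSymm) : S.det = (Wm S).det := by
  rw [← Matrix.det_submatrix_equiv_self (eqv k), submatrix_eqv S hS00 hSsymm,
    Matrix.det_fromBlocks_one₁₁]
  congr 1
  rw [CB_eq]; rfl

lemma inv_submatrix (hS00 : S 0 0 = 1) (hSsymm : S.IsSymm) (hW : IsUnit (Wm S).det) :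
    S⁻¹.submatrix (eqv k) (eqv k) =
      fromBlocks (1 + Bm S * (Wm S)⁻¹ * Cm S) (-(Bm S * (Wm S)⁻¹))
        (-((Wm S)⁻¹ * Cm S)) (Wm S)⁻¹ := by
  rw [← Matrix.inv_submatrix_equiv, submatrix_eqv S hS00 hSsymm]
  apply Matrix.inv_eq_right_inv
  have hW' : S.submatrix Fin.succ Fin.succ = Wm S + Cm S * Bm S := by
    rw [CB_eq]; simp [Wm]
  have h1 : Wm S * (Wm S)⁻¹ = 1 := Matrix.mul_nonsing_inv _ hW
  have h2 : Wm S * ((Wm S)⁻¹ * Cm S) = Cm S := by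
    rw [← Matrix.mul_assoc, h1, Matrix.one_mul]
  rw [fromBlocks_multiply, hW']
  have e11 : (1 : Matrix (Fin 1) (Fin 1) ℝ) * (1 + Bm S * (Wm S)⁻¹ * Cm S) +
      Bm S * -((Wm S)⁻¹ * Cm S) = 1 := by
    simp [Matrix.mul_add, Matrix.mul_neg, Matrix.mul_assoc]
  have e12 : (1 : Matrix (Fin 1) (Fin 1) ℝ) * -(Bm S * (Wm S)⁻¹) +
      Bm S * (Wm S)⁻¹ = 0 := by simp
  have e21 : Cm S * (1 + Bm S * (Wm S)⁻¹ * Cm S) +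
      (Wm S + Cm S * Bm S) * -((Wm S)⁻¹ * Cm S) = 0 := by
    simp only [Matrix.mul_add, Matrix.add_mul, Matrix.mul_neg, Matrix.mul_one,
      Matrix.mul_assoc, h2]
    abel
  have e22 : Cm S * -(Bm S * (Wm S)⁻¹) + (Wm S + Cm S * Bm S) * (Wm S)⁻¹ = 1 := by
    simp only [Matrix.add_mul, Matrix.mul_neg, Matrix.mul_assoc, h1]
    abel
  rw [e11, e12, e21, e22, fromBlocks_one]

lemma dot_reindex (M : Matrix (Fin (k + 1)) (Fin (k + 1)) ℝ)
    (e : (Fin 1 ⊕ Fin k) ≃ Fin (k + 1)) (v : Fin (k + 1) → ℝ) :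
    v ⬝ᵥ M.mulVec v = (v ∘ e) ⬝ᵥ (M.submatrix e e).mulVec (v ∘ e) := by
  rw [Matrix.submatrix_mulVec_equiv]
  have h : (v ∘ e) ∘ e.symm = v := by ext i; simp
  rw [h, dotProduct, dotProduct, ← Equiv.sum_comp e (fun i => v i * (M.mulVec v) i)]
  rfl

lemma block_scalar (W : Matrix (Fin k) (Fin k) ℝ) (z μ : Fin k → ℝ) :
    (fun _ : Fin 1 => (1 : ℝ)) ⬝ᵥ
        ((1 + (Matrix.of fun (_ : Fin 1) j => μ j) * W *
            (Matrix.of fun i (_ : Fin 1) => μ i)).mulVec (fun _ => 1)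
          + (-((Matrix.of fun (_ : Fin 1) j => μ j) * W)).mulVec z)
      + z ⬝ᵥ ((-(W * (Matrix.of fun i (_ : Fin 1) => μ i))).mulVec (fun _ => 1) + W.mulVec z)
      = 1 + (z - μ) ⬝ᵥ W.mulVec (z - μ) := by
  simp only [dotProduct, Pi.add_apply, Matrix.mulVec, Matrix.mul_apply, Matrix.add_apply,
    Matrix.neg_apply, Matrix.one_apply, Pi.sub_apply, Matrix.of_apply, Fin.sum_univ_one,
    mul_one, one_mul, Finset.mul_sum, Finset.sum_mul, sub_mul, mul_sub,
    Finset.sum_sub_distrib, if_true, eq_self_iff_true]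
  simp only [Finset.sum_mul, mul_add, mul_neg, neg_mul, Finset.mul_sum,
    Finset.sum_add_distrib, Finset.sum_neg_distrib, sub_eq_add_neg]
  have c1 : (∑ x : Fin k, ∑ y : Fin k, μ y * W y x * μ x)
      = ∑ x : Fin k, ∑ y : Fin k, μ x * (W x y * μ y) := by
    rw [Finset.sum_comm]
    exact Finset.sum_congr rfl fun x _ => Finset.sum_congr rfl fun y _ => by ring
  have c2 : (∑ x : Fin k, ∑ y : Fin k, μ y * W y x * z x)
      = ∑ x : Fin k, ∑ y : Fin k, μ x * (W x y * z y) := by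
    rw [Finset.sum_comm]
    exact Finset.sum_congr rfl fun x _ => Finset.sum_congr rfl fun y _ => by ring
  rw [c1, c2]
  ring

lemma quad_eq (hS00 : S 0 0 = 1) (hSsymm : S.IsSymm) (hW : IsUnit (Wm S).det)
    (z : Fin k → ℝ) :
    (Fin.cons 1 z : Fin (k + 1) → ℝ) ⬝ᵥ S⁻¹.mulVec (Fin.cons 1 z) =
      1 + (z - fun i => S i.succ 0) ⬝ᵥ (Wm S)⁻¹.mulVec (z - fun i => S i.succ 0) := by
  have hu : (Fin.cons 1 z : Fin (k + 1) → ℝ) ∘ (eqv k)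
      = Sum.elim (fun _ : Fin 1 => (1 : ℝ)) z := by
    ext p
    rcases p with p | p
    · simp [Function.comp, eqv_inl]
    · simp [Function.comp, eqv_inr]
  rw [dot_reindex S⁻¹ (eqv k), hu, inv_submatrix S hS00 hSsymm hW, fromBlocks_mulVec,
    sumElim_dotProduct_sumElim]
  exact block_scalar _ _ _

lemma final_scalar (n : ℕ) (α A Q : ℝ) (hα : 0 < α) (hA : 0 < A) (hQ : 0 < Q) :
    Real.sqrt π * 2 ^ (-(α - 2) / 2) / Real.Gamma ((1 + α) / 2) *
      ((2 * π) ^ (-((n : ℝ) + 1) / 2) * A ^ (-(1 : ℝ) / 2)) *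
      ((Q / 2) ^ (-((n : ℝ) + α + 1) / 2) * (1 / 2) * Real.Gamma (((n : ℝ) + α + 1) / 2))
    = π ^ (-(n : ℝ) / 2) * (α + 1) ^ (-(n : ℝ) / 2) *
        (Real.Gamma (((n : ℝ) + α + 1) / 2) / Real.Gamma ((α + 1) / 2)) *
        (((α + 1 : ℝ)⁻¹) ^ n * A) ^ (-(1 : ℝ) / 2) *
        Q ^ (-(α + (n : ℝ) + 1) / 2) := by
  have hα1 : (0 : ℝ) < α + 1 := by linarith
  have hG2 : 0 < Real.Gamma ((α + 1) / 2) := Real.Gamma_pos_of_pos (by positivity)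
  have hG1 : 0 < Real.Gamma (((n : ℝ) + α + 1) / 2) := Real.Gamma_pos_of_pos (by positivity)
  rw [show (1 + α) / 2 = (α + 1) / 2 by ring]
  have hπ := Real.pi_pos
  have hL : 0 < Real.sqrt π * 2 ^ (-(α - 2) / 2) / Real.Gamma ((α + 1) / 2) *
      ((2 * π) ^ (-((n : ℝ) + 1) / 2) * A ^ (-(1 : ℝ) / 2)) *
      ((Q / 2) ^ (-((n : ℝ) + α + 1) / 2) * (1 / 2) *
        Real.Gamma (((n : ℝ) + α + 1) / 2)) := by positivity
  have hR : 0 < π ^ (-(n : ℝ) / 2) * (α + 1) ^ (-(n : ℝ) / 2) *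
        (Real.Gamma (((n : ℝ) + α + 1) / 2) / Real.Gamma ((α + 1) / 2)) *
        (((α + 1 : ℝ)⁻¹) ^ n * A) ^ (-(1 : ℝ) / 2) *
        Q ^ (-(α + (n : ℝ) + 1) / 2) := by positivity
  refine Real.log_injOn_pos (mem_Ioi.2 hL) (mem_Ioi.2 hR) ?_
  repeat'
    first
    | rw [Real.log_div (by positivity) (by positivity)]
    | rw [Real.log_mul (by positivity) (by positivity)]
  rw [Real.log_rpow two_pos, Real.log_rpow (by positivity : (0 : ℝ) < 2 * π),
    Real.log_rpow hA, Real.log_rpow (by positivity : (0 : ℝ) < Q / 2),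
    Real.log_rpow hπ, Real.log_rpow hα1, Real.log_rpow (by positivity), Real.log_rpow hQ]
  repeat'
    first
    | rw [Real.log_div (by positivity) (by positivity)]
    | rw [Real.log_mul (by positivity) (by positivity)]
  rw [Real.log_pow, Real.log_inv, Real.sqrt_eq_rpow, Real.log_rpow hπ, Real.log_one]
  ring

end Aux

/-- density computation of Lemma 2, extremal-t model: integrating the
tilted Gaussian density radially produces the multivariate Student density with `α + 1`
degrees of freedom, location `μ = (Σ̃ᵢ₀)ᵢ` and scale matrix `Σ̂ = (Σₖ − μμᵀ)/(α+1)`. -/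
theorem extremal_t_radial_integration (k : ℕ) (hk : 1 ≤ k) (α : ℝ) (hα : 0 < α)
    (S : Matrix (Fin (k + 1)) (Fin (k + 1)) ℝ) (hS : S.PosDef)
    (hS00 : S 0 0 = 1) (hSsymm : S.IsSymm)
    (z : Fin k → ℝ) :
    let cα : ℝ := Real.sqrt π * 2 ^ (-(α - 2) / 2) / Real.Gamma ((1 + α) / 2)
    let gtilde : (Fin (k + 1) → ℝ) → ℝ := fun y =>
      (2 * π) ^ (-((k : ℝ) + 1) / 2) * S.det ^ (-(1 : ℝ) / 2) *
        Real.exp (-(y ⬝ᵥ S⁻¹.mulVec y) / 2)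
    let μv : Fin k → ℝ := fun i => S i.succ 0
    let Shat : Matrix (Fin k) (Fin k) ℝ :=
      (α + 1)⁻¹ • (S.submatrix Fin.succ Fin.succ - vecMulVec μv μv)
    Shat.PosDef →
    ∫ y₀ in Set.Ioi (0 : ℝ),
        cα * y₀ ^ ((k : ℝ) + α) * gtilde (Fin.cons y₀ (y₀ • z))
      = π ^ (-(k : ℝ) / 2) * (α + 1) ^ (-(k : ℝ) / 2) *
          (Real.Gamma (((k : ℝ) + α + 1) / 2) / Real.Gamma ((α + 1) / 2)) *
          Shat.det ^ (-(1 : ℝ) / 2) *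
          (1 + ((z - μv) ⬝ᵥ Shat⁻¹.mulVec (z - μv)) / (α + 1)) ^
            (-(α + (k : ℝ) + 1) / 2) := by
  intro cα gtilde μv Shat hShat
  have hα1 : (0 : ℝ) < α + 1 := by linarith
  have hSh : Shat = (α + 1)⁻¹ • Wm S := rfl
  have hShatdet : 0 < Shat.det := hShat.det_pos
  have hWS : Wm S = (α + 1) • Shat := by
    rw [hSh, smul_smul, mul_inv_cancel₀ hα1.ne', one_smul]
  have hWdetpos : 0 < (Wm S).det := by
    rw [hWS, Matrix.det_smul, Fintype.card_fin]
    positivity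
  have hWunit : IsUnit (Wm S).det := isUnit_iff_ne_zero.mpr hWdetpos.ne'
  have hdetS : S.det = (Wm S).det := det_eq S hS00 hSsymm
  set Qv : ℝ := 1 + (z - μv) ⬝ᵥ (Wm S)⁻¹.mulVec (z - μv) with hQdef
  have hquad : (Fin.cons 1 z : Fin (k + 1) → ℝ) ⬝ᵥ S⁻¹.mulVec (Fin.cons 1 z) = Qv :=
    quad_eq S hS00 hSsymm hWunit z
  have hQpos : 0 < Qv := by
    rw [← hquad]
    have hv : (Fin.cons 1 z : Fin (k + 1) → ℝ) ≠ 0 := by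
      intro h
      have := congrFun h 0
      simp at this
    have := (hS.inv).dotProduct_mulVec_pos hv
    simpa using this
  have hShinv : Shat⁻¹ = (α + 1) • (Wm S)⁻¹ := by
    apply Matrix.inv_eq_right_inv
    rw [hSh, Matrix.smul_mul, Matrix.mul_smul, smul_smul, inv_mul_cancel₀ hα1.ne',
      one_smul, Matrix.mul_nonsing_inv _ hWunit]
  have hRinner : 1 + ((z - μv) ⬝ᵥ Shat⁻¹.mulVec (z - μv)) / (α + 1) = Qv := by
    rw [hShinv, hQdef]
    congr 1
    rw [Matrix.smul_mulVec, dotProduct_smul, smul_eq_mul,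
      mul_div_cancel_left₀ _ hα1.ne']
  have hShatdet' : Shat.det = ((α + 1 : ℝ)⁻¹) ^ k * (Wm S).det := by
    rw [hSh, Matrix.det_smul, Fintype.card_fin]
  have hcons : ∀ y₀ : ℝ, (Fin.cons y₀ (y₀ • z) : Fin (k + 1) → ℝ)
      = y₀ • (Fin.cons 1 z : Fin (k + 1) → ℝ) := by
    intro y₀
    funext i
    refine Fin.cases ?_ (fun j => ?_) i <;> simp
  have hg : ∀ y, gtilde y = (2 * π) ^ (-((k : ℝ) + 1) / 2) * S.det ^ (-(1 : ℝ) / 2) *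
      Real.exp (-(y ⬝ᵥ S⁻¹.mulVec y) / 2) := fun _ => rfl
  have hy2 : ∀ y₀ : ℝ, y₀ ^ (2 : ℝ) = y₀ * y₀ := by
    intro y₀
    rw [show (2 : ℝ) = ((2 : ℕ) : ℝ) by norm_num, Real.rpow_natCast]
    ring
  have hint : ∀ y₀ ∈ Ioi (0 : ℝ), cα * y₀ ^ ((k : ℝ) + α) * gtilde (Fin.cons y₀ (y₀ • z))
      = (cα * ((2 * π) ^ (-((k : ℝ) + 1) / 2) * S.det ^ (-(1 : ℝ) / 2))) *
        (y₀ ^ ((k : ℝ) + α) * Real.exp (-(Qv / 2) * y₀ ^ (2 : ℝ))) := by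
    intro y₀ _
    rw [hg, hcons, Matrix.mulVec_smul, dotProduct_smul, smul_dotProduct,
      smul_eq_mul, smul_eq_mul, hquad, hy2]
    ring_nf
  rw [show (∫ y₀ in Set.Ioi (0 : ℝ), cα * y₀ ^ ((k : ℝ) + α) * gtilde (Fin.cons y₀ (y₀ • z)))
      = ∫ y₀ in Set.Ioi (0 : ℝ),
          (cα * ((2 * π) ^ (-((k : ℝ) + 1) / 2) * S.det ^ (-(1 : ℝ) / 2))) *
            (y₀ ^ ((k : ℝ) + α) * Real.exp (-(Qv / 2) * y₀ ^ (2 : ℝ)))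
      from setIntegral_congr_fun measurableSet_Ioi hint]
  rw [MeasureTheory.integral_const_mul,
    integral_rpow_mul_exp_neg_mul_rpow two_pos (by have := (Nat.cast_nonneg k : (0:ℝ) ≤ k); linarith : (-1 : ℝ) < (k : ℝ) + α)
      (by positivity : (0 : ℝ) < Qv / 2)]
  rw [hRinner, hShatdet', hdetS]
  exact final_scalar k α (Wm S).det Qv hα hWdetpos hQpos
end

section
/- Let β > 1 and c_β = 1/Γ(1 − 1/β). Let X be a random variable with the Gamma distribution of shape 1 − 1/β and rate 1. Then the random variable Y = c_β · X^{−1/β} has an absolutely continuous law on (0,∞) with Lebesgue density y ↦ y · (β/c_β) · (y/c_β)^{−1−β} · exp(−(y/c_β)^{−β}) for y > 0 (and density 0 for y ≤ 0); that is, the law of Y is the size-biased Fréchet(β, c_β) distribution. -/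
open MeasureTheory ProbabilityTheory Real

/-- proof of Proposition 9: if `X ~ Gamma(1 − 1/β, 1)` then
`Y = c_β · X^{−1/β}` has the size-biased Fréchet(β, c_β) density
`y ↦ y · (β/c_β)(y/c_β)^{−1−β} exp(−(y/c_β)^{−β})` on `(0,∞)`. -/
theorem sizeBiased_frechet_density (β : ℝ) (hβ : 1 < β)
    (cβ : ℝ) (hcβ : cβ = 1 / Real.Gamma (1 - 1 / β)) :
    Measure.map (fun x : ℝ => cβ * x ^ (-(1 / β))) (gammaMeasure (1 - 1 / β) 1)
      = volume.withDensity (fun y : ℝ =>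
          if 0 < y then
            ENNReal.ofReal
              (y * (β / cβ) * (y / cβ) ^ (-1 - β) * Real.exp (-(y / cβ) ^ (-β)))
          else 0) := by
  have hβ0 : (0:ℝ) < β := lt_trans one_pos hβ
  have hβ0' : β ≠ 0 := ne_of_gt hβ0
  have ha : (0:ℝ) < 1 - 1/β := by
    have : 1/β < 1 := by rw [div_lt_one hβ0]; exact hβ
    linarith
  have hΓ : 0 < Real.Gamma (1 - 1/β) := Real.Gamma_pos_of_pos ha
  have hc : 0 < cβ := by rw [hcβ]; positivity
  have hc0 : cβ ≠ 0 := ne_of_gt hc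
  set f : ℝ → ℝ := fun x => cβ * x ^ (-(1/β)) with hf
  -- key cancellation
  have key : ∀ x : ℝ, 0 < x → (x ^ (-(1/β))) ^ (-β) = x := by
    intro x hx
    rw [← Real.rpow_mul hx.le]
    rw [show (-(1/β)) * (-β) = 1 by field_simp]
    exact Real.rpow_one x
  have key' : ∀ y : ℝ, 0 < y → (y ^ (-β)) ^ (-(1/β)) = y := by
    intro y hy
    rw [← Real.rpow_mul hy.le]
    rw [show (-β) * (-(1/β)) = 1 by field_simp]
    exact Real.rpow_one y
  have hmeas : Measurable f := (measurable_id'.pow_const _).const_mul cβ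
  have hinj : ∀ s : Set ℝ, Set.InjOn f (f ⁻¹' s ∩ Set.Ioi 0) := by
    intro s x hx y hy hxy
    have hx0 : 0 < x := hx.2
    have hy0 : 0 < y := hy.2
    have h1 : x ^ (-(1/β)) = y ^ (-(1/β)) := mul_left_cancel₀ hc0 hxy
    have := congrArg (fun t => t ^ (-β)) h1
    simpa only [key x hx0, key y hy0] using this
  have himg : f '' Set.Ioi 0 = Set.Ioi 0 := by
    ext y
    constructor
    · rintro ⟨x, hx, rfl⟩
      exact mul_pos hc (Real.rpow_pos_of_pos hx _)
    · intro hy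
      refine ⟨(y/cβ) ^ (-β), Real.rpow_pos_of_pos (div_pos hy hc) _, ?_⟩
      simp only [hf]
      rw [key' (y/cβ) (div_pos hy hc), mul_div_cancel₀ _ hc0]
  -- derivative
  have hderiv : ∀ x : ℝ, 0 < x →
      HasDerivAt f (cβ * ((-(1/β)) * x ^ (-(1/β) - 1))) x := by
    intro x hx
    exact (Real.hasDerivAt_rpow_const (Or.inl hx.ne')).const_mul cβ
  ext s hs
  rw [Measure.map_apply hmeas hs, gammaMeasure,
    withDensity_apply _ (hmeas hs), withDensity_apply _ hs]
  -- replace both integrands by indicators on Ioi 0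
  have hpdf_ind : ∀ x : ℝ, gammaPDF (1 - 1/β) 1 x
      = (Set.Ioi (0:ℝ)).indicator (gammaPDF (1 - 1/β) 1) x := by
    intro x
    by_cases hx : 0 < x
    · rw [Set.indicator_of_mem (Set.mem_Ioi.mpr hx)]
    · rw [Set.indicator_of_notMem (by simpa using hx)]
      push_neg at hx
      rcases lt_or_eq_of_le hx with hx' | hx'
      · exact gammaPDF_of_neg hx'
      · subst hx'
        have hne : (1 - 1/β) - 1 ≠ 0 := by
          have h1 : (0:ℝ) < 1/β := by positivity
          intro h; rw [sub_eq_zero] at h; linarith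
        rw [gammaPDF_of_nonneg le_rfl, Real.zero_rpow hne]
        simp
  have hg_ind : ∀ y : ℝ, (if 0 < y then
        ENNReal.ofReal (y * (β / cβ) * (y / cβ) ^ (-1 - β) * Real.exp (-(y / cβ) ^ (-β)))
      else 0)
      = (Set.Ioi (0:ℝ)).indicator (fun y =>
        ENNReal.ofReal (y * (β / cβ) * (y / cβ) ^ (-1 - β) * Real.exp (-(y / cβ) ^ (-β)))) y := by
    intro y
    by_cases hy : 0 < y
    · rw [Set.indicator_of_mem (Set.mem_Ioi.mpr hy), if_pos hy]
    · rw [Set.indicator_of_notMem (by simpa using hy), if_neg hy]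
  rw [setLIntegral_congr_fun (hmeas hs) (fun x _ => hpdf_ind x),
    setLIntegral_congr_fun hs (fun y _ => hg_ind y),
    setLIntegral_indicator measurableSet_Ioi, setLIntegral_indicator measurableSet_Ioi]
  -- rewrite the RHS domain as image
  have hdom : Set.Ioi (0:ℝ) ∩ s = f '' (f ⁻¹' s ∩ Set.Ioi 0) := by
    rw [Set.image_preimage_inter, himg, Set.inter_comm]
  rw [hdom,
    lintegral_image_eq_lintegral_abs_det_fderiv_mul volume
      ((hmeas hs).inter measurableSet_Ioi)
      (fun x hx => ((hderiv x hx.2).hasDerivWithinAt).hasFDerivWithinAt)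
      (hinj s) _]
  rw [show Set.Ioi (0:ℝ) ∩ f ⁻¹' s = f ⁻¹' s ∩ Set.Ioi 0 from Set.inter_comm _ _]
  apply setLIntegral_congr_fun ((hmeas hs).inter measurableSet_Ioi)
  rintro x ⟨-, hx⟩
  have hx : (0:ℝ) < x := hx
  beta_reduce
  rw [ContinuousLinearMap.det_toSpanSingleton]
  rw [gammaPDF_of_nonneg hx.le]
  have hfx : f x / cβ = x ^ (-(1/β)) := by
    simp only [hf]; rw [mul_div_cancel_left₀ _ hc0]
  have hxp : (0:ℝ) < x ^ (-(1/β)) := Real.rpow_pos_of_pos hx _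
  have h2 : (x ^ (-(1/β))) ^ (-1 - β) = x ^ ((1:ℝ)/β + 1) := by
    rw [← Real.rpow_mul hx.le]
    congr 1
    field_simp
    ring
  have h3 : f x * (β/cβ) * (f x/cβ) ^ (-1 - β) * Real.exp (-(f x/cβ) ^ (-β))
      = cβ * x ^ (-(1/β)) * (β/cβ) * x ^ ((1:ℝ)/β + 1) * Real.exp (-x) := by
    rw [hfx, h2, key x hx]
  have habs : |cβ * ((-(1/β)) * x ^ (-(1/β) - 1))| = cβ * ((1/β) * x ^ (-(1/β) - 1)) := by
    rw [abs_of_nonpos]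
    · ring
    · apply mul_nonpos_of_nonneg_of_nonpos hc.le
      apply mul_nonpos_of_nonpos_of_nonneg
      · simp [le_of_lt, hβ0, div_nonneg]
      · exact (Real.rpow_pos_of_pos hx _).le
  rw [h3, habs, ← ENNReal.ofReal_mul (by positivity)]
  congr 1
  have hΓc : Real.Gamma (1 - 1/β) = 1/cβ := by rw [hcβ]; field_simp
  rw [Real.one_rpow, hΓc, one_div_one_div,
    show (1 - 1/β) - 1 = -(1/β) by ring, show -(1*x) = -x by ring]
  have huw : x ^ (-(1/β) - 1) * x ^ ((1:ℝ)/β + 1) = 1 := by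
    rw [← Real.rpow_add hx]
    norm_num
  have hre : cβ * ((1/β) * x ^ (-(1/β) - 1))
        * (cβ * x ^ (-(1/β)) * (β/cβ) * x ^ ((1:ℝ)/β + 1) * Real.exp (-x))
      = (cβ * x ^ (-(1/β)) * Real.exp (-x))
        * (x ^ (-(1/β) - 1) * x ^ ((1:ℝ)/β + 1)) * ((1/β) * β * (cβ/cβ)) := by
    ring
  rw [hre, huw, div_self hc0]
  field_simp
end

section
/- Let N ≥ 1, θ > 0, c_θ = 1/Γ(1 + 1/θ), and let W_1,…,W_N be independent random variables, each with the Weibull(θ, c_θ) distribution, i.e. P(W_j ≤ t) = 1 − exp(−(t/c_θ)^θ) for t ≥ 0 and P(W_j ≤ t) = 0 for t < 0. Then for every z = (z_1,…,z_N) ∈ (0,∞)^N, E[max_{j=1,…,N} W_j/z_j] = − Σ_{∅ ≠ J ⊆ {1,…,N}} (−1)^{|J|} (Σ_{j∈J} z_j^{θ})^{−1/θ}. -/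
open MeasureTheory ProbabilityTheory Real Set Finset

lemma weibull_aux_integrable {θ b : ℝ} (hθ : 0 < θ) (hb : 0 < b) :
    IntegrableOn (fun x : ℝ => Real.exp (-(b * x ^ θ))) (Set.Ioi 0) := by
  have h0 : IntegrableOn (fun y : ℝ => y ^ (1/θ - 1) * Real.exp (-b * y)) (Set.Ioi 0) := by
    have hgt : (0:ℝ) < 1/θ := by positivity
    have := integrableOn_rpow_mul_exp_neg_mul_rpow (p := 1) (s := 1/θ - 1) (b := b)
      (by linarith) zero_lt_one hb
    simpa using this
  have h1 := (integrableOn_Ioi_comp_rpow_iff'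
      (fun y : ℝ => y ^ (1/θ - 1) * Real.exp (-b * y)) (p := θ) hθ.ne').mpr h0
  refine h1.congr_fun (fun x hx => ?_) measurableSet_Ioi
  have hx0 : (0:ℝ) < x := hx
  have hxθ : (x ^ θ) ^ (1/θ - 1) = x ^ (1 - θ) := by
    rw [← Real.rpow_mul hx0.le]
    congr 1
    field_simp
  simp only [smul_eq_mul, hxθ, neg_mul]
  rw [← mul_assoc, ← Real.rpow_add hx0]
  norm_num

lemma weibull_aux_integral {θ b : ℝ} (hθ : 0 < θ) (hb : 0 < b) :
    ∫ x in Set.Ioi (0:ℝ), Real.exp (-(b * x ^ θ)) = b ^ (-(1/θ)) * Real.Gamma (1 + 1/θ) := by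
  have h := integral_rpow_mul_exp_neg_mul_rpow (p := θ) (q := 0) (b := b) hθ (by norm_num) hb
  simp only [Real.rpow_zero, one_mul, neg_mul, zero_add] at h
  rw [h, add_comm (1:ℝ) (1/θ), Real.Gamma_add_one (by positivity : (1:ℝ)/θ ≠ 0), neg_div]
  ring


/-- proof of Proposition 10, negative logistic model: for independent
Weibull(θ, c_θ) random variables `W_1, …, W_N` with `θ > 0` and `c_θ = 1/Γ(1 + 1/θ)`,
`E[max_j W_j / z_j] = − Σ_{∅ ≠ J ⊆ {1,…,N}} (−1)^{|J|} (Σ_{j∈J} z_j^θ)^{−1/θ}` for every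
`z ∈ (0,∞)^N`. -/
theorem weibull_max_expectation (N : ℕ) (hN : 1 ≤ N)
    (θ : ℝ) (hθ : 0 < θ)
    (cθ : ℝ) (hcθ : cθ = 1 / Real.Gamma (1 + 1 / θ))
    (Ω : Type) [MeasureSpace Ω] [IsProbabilityMeasure (ℙ : Measure Ω)]
    (W : Fin N → Ω → ℝ) (hWmeas : ∀ j, Measurable (W j))
    (hWindep : iIndepFun W ℙ)
    (hWcdf_nonneg : ∀ j : Fin N, ∀ t : ℝ, 0 ≤ t →
      ℙ {ω | W j ω ≤ t} = ENNReal.ofReal (1 - Real.exp (-(t / cθ) ^ θ)))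
    (hWcdf_neg : ∀ j : Fin N, ∀ t : ℝ, t < 0 → ℙ {ω | W j ω ≤ t} = 0)
    (z : Fin N → ℝ) (hz : ∀ j, 0 < z j) :
    ∫⁻ ω, ENNReal.ofReal (⨆ j, W j ω / z j) ∂ℙ
      = ENNReal.ofReal
          (- ∑ J ∈ Finset.univ.powerset.filter (fun J : Finset (Fin N) => J.Nonempty),
              (-1 : ℝ) ^ J.card * (∑ j ∈ J, z j ^ θ) ^ (-(1 / θ))) := by
  have hΓpos : 0 < Real.Gamma (1 + 1/θ) := Real.Gamma_pos_of_pos (by positivity)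
  have hc : 0 < cθ := by rw [hcθ]; positivity
  have j0 : Fin N := ⟨0, hN⟩
  haveI : Nonempty (Fin N) := ⟨j0⟩
  -- a.e. nonnegativity
  have h0ae : ∀ᵐ ω ∂(ℙ : Measure Ω), 0 ≤ W j0 ω := by
    have hsub : {ω | W j0 ω < 0} ⊆ ⋃ n : ℕ, {ω | W j0 ω ≤ -(1/(n+1))} := by
      intro ω hω
      obtain ⟨n, hn⟩ := exists_nat_one_div_lt (K := ℝ) (neg_pos.mpr hω)
      exact Set.mem_iUnion.mpr ⟨n, by simp only [Set.mem_setOf_eq]; linarith⟩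
    have h0 : ℙ {ω | W j0 ω < 0} = 0 := by
      refine measure_mono_null hsub (measure_iUnion_null fun n => ?_)
      exact hWcdf_neg j0 _ (neg_lt_zero.mpr (by positivity))
    filter_upwards [measure_eq_zero_iff_ae_notMem.mp h0] with ω hω
    simpa using hω
  set f : Ω → ℝ := fun ω => ⨆ j, W j ω / z j with hf
  have hbdd : ∀ ω, BddAbove (Set.range fun j => W j ω / z j) :=
    fun ω => Set.Finite.bddAbove (Set.finite_range _)
  have hf_meas : Measurable f := Measurable.iSup fun j => (hWmeas j).div_const _
  have hf_nn : 0 ≤ᵐ[(ℙ : Measure Ω)] f := by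
    filter_upwards [h0ae] with ω hω
    exact le_trans (div_nonneg hω (hz j0).le) (le_ciSup (hbdd ω) j0)
  rw [lintegral_eq_lintegral_meas_lt ℙ hf_nn hf_meas.aemeasurable]
  -- notation
  set P : Finset (Finset (Fin N)) :=
    Finset.univ.powerset.filter (fun J : Finset (Fin N) => J.Nonempty) with hP
  set E : Finset (Fin N) → ℝ := fun J => ∑ j ∈ J, (z j / cθ) ^ θ with hE
  have hEpos : ∀ J ∈ P, 0 < E J := by
    intro J hJ
    have hJne : J.Nonempty := (Finset.mem_filter.mp hJ).2
    exact Finset.sum_pos (fun j _ => Real.rpow_pos_of_pos (div_pos (hz j) hc) θ) hJne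
  set G : ℝ → ℝ := fun t => 1 - ∏ j, (1 - Real.exp (-((z j * t / cθ) ^ θ))) with hG
  -- factors in [0,1]
  have hfac : ∀ (j : Fin N) (t : ℝ), 0 ≤ t →
      0 ≤ 1 - Real.exp (-((z j * t / cθ) ^ θ)) ∧ 1 - Real.exp (-((z j * t / cθ) ^ θ)) ≤ 1 := by
    intro j t ht
    have h1 : (0:ℝ) ≤ (z j * t / cθ) ^ θ := Real.rpow_nonneg (div_nonneg (mul_nonneg (hz j).le ht) hc.le) θ
    constructor
    · have := Real.exp_le_one_iff.mpr (neg_nonpos.mpr h1)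
      linarith
    · have := Real.exp_pos (-((z j * t / cθ) ^ θ))
      linarith
  have hGmem : ∀ t : ℝ, 0 ≤ t → 0 ≤ G t ∧ G t ≤ 1 := by
    intro t ht
    have hprod0 : (0:ℝ) ≤ ∏ j, (1 - Real.exp (-((z j * t / cθ) ^ θ))) :=
      Finset.prod_nonneg fun j _ => (hfac j t ht).1
    have hprod1 : (∏ j, (1 - Real.exp (-((z j * t / cθ) ^ θ)))) ≤ 1 :=
      Finset.prod_le_one (fun j _ => (hfac j t ht).1) (fun j _ => (hfac j t ht).2)
    constructor <;> simp only [hG] <;> linarith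
  -- step 2: tail probability
  have hmeas_t : ∀ t ∈ Set.Ioi (0:ℝ), ℙ {ω | t < f ω} = ENNReal.ofReal (G t) := by
    intro t ht
    have ht0 : (0:ℝ) < t := ht
    have hset : {ω | t < f ω} = (⋂ j, W j ⁻¹' Set.Iic (z j * t))ᶜ := by
      ext ω
      simp only [Set.mem_setOf_eq, Set.mem_compl_iff, Set.mem_iInter, Set.mem_preimage,
        Set.mem_Iic, ← not_le, hf, ciSup_le_iff (hbdd ω)]
      exact not_congr (forall_congr' fun j => by
        rw [div_le_iff₀ (hz j), mul_comm])
    have hmeasInter : MeasurableSet (⋂ j, W j ⁻¹' Set.Iic (z j * t)) :=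
      MeasurableSet.iInter fun j => (hWmeas j) measurableSet_Iic
    have hindep : ℙ (⋂ j, W j ⁻¹' Set.Iic (z j * t)) = ∏ j, ℙ (W j ⁻¹' Set.Iic (z j * t)) :=
      hWindep.meas_iInter fun j => ⟨Set.Iic (z j * t), measurableSet_Iic, rfl⟩
    have hcdf : ∀ j : Fin N, ℙ (W j ⁻¹' Set.Iic (z j * t))
        = ENNReal.ofReal (1 - Real.exp (-((z j * t / cθ) ^ θ))) := by
      intro j
      have : W j ⁻¹' Set.Iic (z j * t) = {ω | W j ω ≤ z j * t} := rfl
      rw [this, hWcdf_nonneg j (z j * t) (mul_nonneg (hz j).le ht0.le)]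
    have hprodnn : (0:ℝ) ≤ ∏ j, (1 - Real.exp (-((z j * t / cθ) ^ θ))) :=
      Finset.prod_nonneg fun j _ => (hfac j t ht0.le).1
    rw [hset, measure_compl hmeasInter (measure_ne_top _ _), measure_univ, hindep]
    simp_rw [hcdf]
    rw [← ENNReal.ofReal_prod_of_nonneg fun j _ => (hfac j t ht0.le).1,
      ← ENNReal.ofReal_one, ← ENNReal.ofReal_sub _ hprodnn]
  rw [setLIntegral_congr_fun measurableSet_Ioi hmeas_t]
  -- inclusion–exclusion representation
  set F : Finset (Fin N) → ℝ → ℝ := fun J t => (-(-1:ℝ)^J.card) * Real.exp (-(E J * t ^ θ)) with hF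
  have hGrep : ∀ t ∈ Set.Ioi (0:ℝ), G t = ∑ J ∈ P, F J t := by
    intro t ht
    have ht0 : (0:ℝ) < t := ht
    have hterm : ∀ j : Fin N, (z j * t / cθ) ^ θ = (z j / cθ) ^ θ * t ^ θ := by
      intro j
      rw [show z j * t / cθ = (z j / cθ) * t by ring,
        Real.mul_rpow (div_pos (hz j) hc).le ht0.le]
    have hprodJ : ∀ J : Finset (Fin N),
        (∏ j ∈ J, Real.exp (-((z j * t / cθ) ^ θ))) = Real.exp (-(E J * t ^ θ)) := by
      intro J
      rw [← Real.exp_sum]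
      congr 1
      rw [hE, Finset.sum_mul, ← Finset.sum_neg_distrib]
      exact Finset.sum_congr rfl fun j _ => by rw [hterm j]
    have hpa : (∏ j, (1 - Real.exp (-((z j * t / cθ) ^ θ))))
        = ∑ J ∈ Finset.univ.powerset, (-1:ℝ)^J.card * Real.exp (-(E J * t ^ θ)) := by
      have := Finset.prod_add (fun j : Fin N => -Real.exp (-((z j * t / cθ) ^ θ)))
        (fun _ : Fin N => (1:ℝ)) Finset.univ
      simp only [neg_add_eq_sub, Finset.prod_const_one, mul_one] at this
      rw [this]
      refine Finset.sum_congr rfl fun J _ => ?_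
      calc ∏ i ∈ J, -Real.exp (-((z i * t / cθ) ^ θ))
          = ∏ i ∈ J, ((-1:ℝ) * Real.exp (-((z i * t / cθ) ^ θ))) := by
            refine Finset.prod_congr rfl fun i _ => by ring
        _ = (∏ _i ∈ J, (-1:ℝ)) * ∏ i ∈ J, Real.exp (-((z i * t / cθ) ^ θ)) :=
            Finset.prod_mul_distrib
        _ = (-1:ℝ)^J.card * Real.exp (-(E J * t ^ θ)) := by
            rw [Finset.prod_const, hprodJ J]
    have hsplit : ∑ J ∈ Finset.univ.powerset, (-1:ℝ)^J.card * Real.exp (-(E J * t ^ θ))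
        = (∑ J ∈ P, (-1:ℝ)^J.card * Real.exp (-(E J * t ^ θ))) + 1 := by
      rw [← Finset.sum_filter_add_sum_filter_not Finset.univ.powerset
        (fun J : Finset (Fin N) => J.Nonempty)]
      congr 1
      have hempty : Finset.univ.powerset.filter
          (fun J : Finset (Fin N) => ¬ J.Nonempty) = {∅} := by
        ext J
        simp [Finset.not_nonempty_iff_eq_empty]
      rw [hempty, Finset.sum_singleton]
      simp [hE]
    show (1:ℝ) - ∏ j, (1 - Real.exp (-((z j * t / cθ) ^ θ))) = ∑ J ∈ P, F J t
    rw [hpa, hsplit]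
    rw [show ∀ a : ℝ, 1 - (a + 1) = -a from fun a => by ring, ← Finset.sum_neg_distrib]
    exact Finset.sum_congr rfl fun J _ => by simp only [hF]; ring
  -- pass to Bochner integral
  have hsum_int : IntegrableOn (fun t => ∑ J ∈ P, F J t) (Set.Ioi (0:ℝ)) := by
    refine integrable_finset_sum _ fun J hJ => ?_
    exact (weibull_aux_integrable hθ (hEpos J hJ)).const_mul _
  have hG_int : IntegrableOn G (Set.Ioi (0:ℝ)) :=
    hsum_int.congr_fun (fun t ht => (hGrep t ht).symm) measurableSet_Ioi
  have hG_nn : 0 ≤ᵐ[volume.restrict (Set.Ioi (0:ℝ))] G :=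
    (ae_restrict_iff' measurableSet_Ioi).mpr
      (ae_of_all _ fun t ht => (hGmem t (le_of_lt ht)).1)
  rw [← ofReal_integral_eq_lintegral_ofReal hG_int hG_nn]
  congr 1
  -- compute the integral
  rw [setIntegral_congr_fun measurableSet_Ioi hGrep,
    integral_finset_sum _ fun J hJ => (weibull_aux_integrable hθ (hEpos J hJ)).const_mul _]
  rw [← Finset.sum_neg_distrib]
  refine Finset.sum_congr rfl fun J hJ => ?_
  have hSpos : 0 < ∑ j ∈ J, z j ^ θ :=
    Finset.sum_pos (fun j _ => Real.rpow_pos_of_pos (hz j) θ) (Finset.mem_filter.mp hJ).2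
  have hEJ : E J = (∑ j ∈ J, z j ^ θ) * (cθ ^ θ)⁻¹ := by
    rw [hE, Finset.sum_mul]
    exact Finset.sum_congr rfl fun j _ => by
      rw [Real.div_rpow (hz j).le hc.le, div_eq_mul_inv]
  have hval : ∫ t in Set.Ioi (0:ℝ), F J t
      = (-(-1:ℝ)^J.card) * ((E J) ^ (-(1/θ)) * Real.Gamma (1 + 1/θ)) := by
    simp only [hF]
    rw [integral_const_mul, weibull_aux_integral hθ (hEpos J hJ)]
  rw [hval]
  have hEpow : (E J) ^ (-(1/θ)) = (∑ j ∈ J, z j ^ θ) ^ (-(1/θ)) * cθ := by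
    rw [hEJ, Real.mul_rpow hSpos.le (by positivity), Real.inv_rpow (by positivity),
      ← Real.rpow_mul hc.le, show θ * -(1/θ) = -1 by field_simp, Real.rpow_neg_one, inv_inv]
  rw [hEpow, hcθ]
  field_simp
end
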